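/- arXiv:1011.4795 — 5 statements merged into one kernel-verified Lean document; each statement's English description precedes it below -/
import Mathlib

section
/- Let f : ℝ≥0² → ℝ be four times continuously differentiable with f(0,0)=0, f₁(0,0)=0, f₂(0,0)=0, f₁₂(0,0)=0, and suppose all relevant integrals converge absolutely. Then for all (x,y) ∈ ℝ≥0²: f(x,y) = ∫_0^∞ [f₁₁(k₁,0)·(x-k₁)_+ + f₁₂₁(k₁,0)·y·(x-k₁)_+] dk₁ + ∫_0^∞ [f₂₂(0,k₂)·(y-k₂)_+ + f₁₂₂(0,k₂)·x·(y-k₂)_+] dk₂ + ∫_0^∞ ∫_0^∞ f₁₂₂₁(k₁,k₂)·(x-k₁)_+·(y-k₂)_+ dk₁ dk₂. -/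
open MeasureTheory Set

noncomputable def D1 (F : ℝ × ℝ → ℝ) : ℝ × ℝ → ℝ := fun p => fderiv ℝ F p (1, 0)
noncomputable def D2 (F : ℝ × ℝ → ℝ) : ℝ × ℝ → ℝ := fun p => fderiv ℝ F p (0, 1)

lemma hasDerivAt_D1 {F : ℝ × ℝ → ℝ} (hF : Differentiable ℝ F) (x y : ℝ) :
    HasDerivAt (fun t => F (t, y)) (D1 F (x, y)) x := by
  have h1 : HasDerivAt (fun t : ℝ => (t, y)) ((1:ℝ), (0:ℝ)) x :=
    (hasDerivAt_id x).prodMk (hasDerivAt_const x y)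
  exact (hF (x, y)).hasFDerivAt.comp_hasDerivAt x h1

lemma hasDerivAt_D2 {F : ℝ × ℝ → ℝ} (hF : Differentiable ℝ F) (x y : ℝ) :
    HasDerivAt (fun t => F (x, t)) (D2 F (x, y)) y := by
  have h1 : HasDerivAt (fun t : ℝ => (x, t)) ((0:ℝ), (1:ℝ)) y :=
    (hasDerivAt_const y x).prodMk (hasDerivAt_id y)
  exact (hF (x, y)).hasFDerivAt.comp_hasDerivAt y h1

lemma contDiff_D1 {F : ℝ × ℝ → ℝ} {n m : WithTop ℕ∞} (hF : ContDiff ℝ m F) (hm : n + 1 ≤ m) :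
    ContDiff ℝ n (D1 F) :=
  (hF.fderiv_right hm).clm_apply contDiff_const

lemma contDiff_D2 {F : ℝ × ℝ → ℝ} {n m : WithTop ℕ∞} (hF : ContDiff ℝ m F) (hm : n + 1 ≤ m) :
    ContDiff ℝ n (D2 F) :=
  (hF.fderiv_right hm).clm_apply contDiff_const

lemma cont_slice1 {G : ℝ × ℝ → ℝ} (hG : Continuous G) (b : ℝ) :
    Continuous fun t : ℝ => G (t, b) := hG.comp (continuous_id.prodMk continuous_const)

lemma cont_slice2 {G : ℝ × ℝ → ℝ} (hG : Continuous G) (a : ℝ) :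
    Continuous fun t : ℝ => G (a, t) := hG.comp (continuous_const.prodMk continuous_id)

lemma primitive_hasDerivAt {ψ : ℝ → ℝ} (hψ : Continuous ψ) (u : ℝ) :
    HasDerivAt (fun v => ∫ k in (0:ℝ)..v, ψ k) (ψ u) u :=
  intervalIntegral.integral_hasDerivAt_right (hψ.intervalIntegrable 0 u)
    (hψ.stronglyMeasurable.stronglyMeasurableAtFilter) hψ.continuousAt

lemma ftc0 {φ d : ℝ → ℝ} (h : ∀ t, HasDerivAt φ (d t) t) (hd : Continuous d) (x : ℝ) :
    ∫ t in (0:ℝ)..x, d t = φ x - φ 0 :=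
  intervalIntegral.integral_eq_sub_of_hasDerivAt (fun t _ => h t) (hd.intervalIntegrable 0 x)

lemma swap_kernel {ψ : ℝ → ℝ} (hψ : Continuous ψ) (x : ℝ) :
    (∫ s in (0:ℝ)..x, ∫ k in (0:ℝ)..s, ψ k) = ∫ k in (0:ℝ)..x, (x - k) * ψ k := by
  set Fψ : ℝ → ℝ := fun u => ∫ k in (0:ℝ)..u, ψ k with hFdef
  have hFd : ∀ u, HasDerivAt Fψ (ψ u) u := primitive_hasDerivAt hψ
  have hFdiff : Differentiable ℝ Fψ := fun u => (hFd u).differentiableAt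
  have hFc : Continuous Fψ := hFdiff.continuous
  have hG : ∀ u, HasDerivAt (fun v => ∫ k in (0:ℝ)..v, k * ψ k) (u * ψ u) u :=
    fun u => primitive_hasDerivAt (continuous_id.mul hψ) u
  have hΔ : ∀ u, HasDerivAt
      (fun v => (∫ s in (0:ℝ)..v, Fψ s) - (v * Fψ v - ∫ k in (0:ℝ)..v, k * ψ k)) 0 u := by
    intro u
    have h1 : HasDerivAt (fun v => ∫ s in (0:ℝ)..v, Fψ s) (Fψ u) u :=
      primitive_hasDerivAt hFc u
    have h2 : HasDerivAt (fun v => v * Fψ v) (1 * Fψ u + u * ψ u) u :=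
      (hasDerivAt_id u).mul (hFd u)
    have h3 := h1.sub (h2.sub (hG u))
    refine h3.congr_deriv ?_
    ring
  have key := is_const_of_deriv_eq_zero (fun u => (hΔ u).differentiableAt)
      (fun u => (hΔ u).deriv) x 0
  simp only [intervalIntegral.integral_same, mul_zero, zero_mul, sub_zero, sub_self] at key
  have hrhs : (∫ k in (0:ℝ)..x, (x - k) * ψ k)
      = x * (∫ k in (0:ℝ)..x, ψ k) - ∫ k in (0:ℝ)..x, k * ψ k := by
    have hfe : (fun k => (x - k) * ψ k) = fun k => x * ψ k - k * ψ k := by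
      funext k; ring
    have hi1 : IntervalIntegrable (fun k : ℝ => x * ψ k) volume 0 x :=
      (continuous_const.mul hψ).intervalIntegrable 0 x
    have hi2 : IntervalIntegrable (fun k : ℝ => k * ψ k) volume 0 x :=
      (continuous_id.mul hψ).intervalIntegrable 0 x
    rw [hfe, intervalIntegral.integral_sub hi1 hi2, intervalIntegral.integral_const_mul]
  rw [hrhs]
  linarith [key]

lemma taylor2 {φ d1 d2 : ℝ → ℝ} (h1 : ∀ t, HasDerivAt φ (d1 t) t)
    (h2 : ∀ t, HasDerivAt d1 (d2 t) t) (hc2 : Continuous d2) (x : ℝ) :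
    φ x = φ 0 + x * d1 0 + ∫ k in (0:ℝ)..x, (x - k) * d2 k := by
  have hd1diff : Differentiable ℝ d1 := fun t => (h2 t).differentiableAt
  have hc1 : Continuous d1 := hd1diff.continuous
  have hFTC1 : ∫ t in (0:ℝ)..x, d1 t = φ x - φ 0 := ftc0 h1 hc1 x
  have hd1eq : ∀ t, d1 t = d1 0 + ∫ k in (0:ℝ)..t, d2 k := by
    intro t
    have := ftc0 h2 hc2 t
    linarith
  have hprim : Continuous fun t => ∫ k in (0:ℝ)..t, d2 k :=
    intervalIntegral.continuous_primitive (fun a b => hc2.intervalIntegrable a b) 0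
  have hsplit : (∫ t in (0:ℝ)..x, d1 t)
      = (∫ t in (0:ℝ)..x, d1 0) + ∫ t in (0:ℝ)..x, ∫ k in (0:ℝ)..t, d2 k := by
    rw [← intervalIntegral.integral_add (intervalIntegrable_const)
      (hprim.intervalIntegrable 0 x)]
    exact intervalIntegral.integral_congr (fun t _ => hd1eq t)
  rw [intervalIntegral.integral_const, swap_kernel hc2 x, smul_eq_mul] at hsplit
  have := hsplit
  rw [hFTC1] at this
  linarith

lemma fubini_cont {Φ : ℝ × ℝ → ℝ} (hΦ : Continuous Φ) {x y : ℝ} (hx : 0 ≤ x) (hy : 0 ≤ y) :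
    (∫ s in (0:ℝ)..x, ∫ r in (0:ℝ)..y, Φ (s, r)) = ∫ r in (0:ℝ)..y, ∫ s in (0:ℝ)..x, Φ (s, r) := by
  simp only [intervalIntegral.integral_of_le hx, intervalIntegral.integral_of_le hy]
  have hint : Integrable (Function.uncurry fun s r => Φ (s, r))
      ((volume.restrict (Ioc 0 x)).prod (volume.restrict (Ioc 0 y))) := by
    have huc : (Function.uncurry fun s r => Φ (s, r)) = Φ := rfl
    rw [huc, Measure.prod_restrict, ← MeasureTheory.Measure.volume_eq_prod]
    exact (hΦ.continuousOn.integrableOn_compact (isCompact_Icc.prod isCompact_Icc)).mono_set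
      (prod_mono Ioc_subset_Icc_self Ioc_subset_Icc_self)
  exact MeasureTheory.integral_integral_swap hint

lemma integral_Ioi_eq_intervalIntegral {g : ℝ → ℝ} (hg : Continuous g) {x : ℝ} (hx : 0 ≤ x)
    (hvan : ∀ k, x < k → g k = 0) :
    ∫ k in Ioi (0:ℝ), g k = ∫ k in (0:ℝ)..x, g k := by
  rw [intervalIntegral.integral_of_le hx, ← Ioc_union_Ioi_eq_Ioi hx,
    setIntegral_union (Ioc_disjoint_Ioi le_rfl) measurableSet_Ioi hg.integrableOn_Ioc
      ((integrableOn_congr_fun (fun k hk => hvan k hk) measurableSet_Ioi).mpr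
        (integrableOn_zero))]
  rw [setIntegral_congr_fun measurableSet_Ioi (fun k hk => hvan k hk), integral_zero, add_zero]

/-- Partial derivative with respect to the first variable. -/
noncomputable def pd1 (f : ℝ → ℝ → ℝ) : ℝ → ℝ → ℝ := fun x y => deriv (fun t => f t y) x

/-- Partial derivative with respect to the second variable. -/
noncomputable def pd2 (f : ℝ → ℝ → ℝ) : ℝ → ℝ → ℝ := fun x y => deriv (fun t => f x t) y

set_option maxHeartbeats 2000000 in
theorem bivariate_static_replication_at_origin
    (f : ℝ → ℝ → ℝ) (hf : ContDiff ℝ 4 (fun p : ℝ × ℝ => f p.1 p.2))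
    (h0 : f 0 0 = 0) (h1 : pd1 f 0 0 = 0) (h2 : pd2 f 0 0 = 0)
    (h12 : pd2 (pd1 f) 0 0 = 0)
    (hint1 : ∀ x y : ℝ, 0 ≤ x → 0 ≤ y → IntegrableOn
      (fun k₁ => pd1 (pd1 f) k₁ 0 * max (x - k₁) 0
        + pd1 (pd2 (pd1 f)) k₁ 0 * y * max (x - k₁) 0) (Set.Ioi 0))
    (hint2 : ∀ x y : ℝ, 0 ≤ x → 0 ≤ y → IntegrableOn
      (fun k₂ => pd2 (pd2 f) 0 k₂ * max (y - k₂) 0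
        + pd2 (pd2 (pd1 f)) 0 k₂ * x * max (y - k₂) 0) (Set.Ioi 0))
    (hint3 : ∀ x y : ℝ, 0 ≤ x → 0 ≤ y → IntegrableOn
      (fun p : ℝ × ℝ => pd1 (pd2 (pd2 (pd1 f))) p.1 p.2
        * max (x - p.1) 0 * max (y - p.2) 0) (Set.Ioi 0 ×ˢ Set.Ioi 0)) :
    ∀ x y : ℝ, 0 ≤ x → 0 ≤ y →
      f x y
        = (∫ k₁ in Set.Ioi (0:ℝ), (pd1 (pd1 f) k₁ 0 * max (x - k₁) 0
            + pd1 (pd2 (pd1 f)) k₁ 0 * y * max (x - k₁) 0))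
        + (∫ k₂ in Set.Ioi (0:ℝ), (pd2 (pd2 f) 0 k₂ * max (y - k₂) 0
            + pd2 (pd2 (pd1 f)) 0 k₂ * x * max (y - k₂) 0))
        + ∫ k₂ in Set.Ioi (0:ℝ), ∫ k₁ in Set.Ioi (0:ℝ),
            pd1 (pd2 (pd2 (pd1 f))) k₁ k₂ * max (x - k₁) 0 * max (y - k₂) 0 := by
  intro x y hx hy
  set F : ℝ × ℝ → ℝ := fun p : ℝ × ℝ => f p.1 p.2 with hFdef
  have hF4 : ContDiff ℝ 4 F := hf
  have h4d : Differentiable ℝ F := hF4.differentiable (by norm_num)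
  have hF1 : ContDiff ℝ 3 (D1 F) := contDiff_D1 hF4 (by norm_num)
  have hF2 : ContDiff ℝ 3 (D2 F) := contDiff_D2 hF4 (by norm_num)
  have hH2 : ContDiff ℝ 2 (D2 (D1 F)) := contDiff_D2 hF1 (by norm_num)
  have hE2 : ContDiff ℝ 2 (D1 (D1 F)) := contDiff_D1 hF1 (by norm_num)
  have hF22 : ContDiff ℝ 2 (D2 (D2 F)) := contDiff_D2 hF2 (by norm_num)
  have hA1 : ContDiff ℝ 1 (D1 (D2 (D1 F))) := contDiff_D1 hH2 (by norm_num)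
  have hW1 : ContDiff ℝ 1 (D2 (D2 (D1 F))) := contDiff_D2 hH2 (by norm_num)
  have hQc : Continuous (D1 (D2 (D2 (D1 F)))) :=
    (contDiff_D1 hW1 (by norm_num) : ContDiff ℝ 0 _).continuous
  have h1d : Differentiable ℝ (D1 F) := hF1.differentiable (by norm_num)
  have h2d : Differentiable ℝ (D2 F) := hF2.differentiable (by norm_num)
  have hHd : Differentiable ℝ (D2 (D1 F)) := hH2.differentiable (by norm_num)
  have hWd : Differentiable ℝ (D2 (D2 (D1 F))) := hW1.differentiable (by norm_num)
  have hF1c : Continuous (D1 F) := hF1.continuous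
  have hF2c : Continuous (D2 F) := hF2.continuous
  have hH2c : Continuous (D2 (D1 F)) := hH2.continuous
  have hE2c : Continuous (D1 (D1 F)) := hE2.continuous
  have hF22c : Continuous (D2 (D2 F)) := hF22.continuous
  have hA1c : Continuous (D1 (D2 (D1 F))) := hA1.continuous
  have hW1c : Continuous (D2 (D2 (D1 F))) := hW1.continuous
  -- translations of pd to D
  have ep1 : ∀ a b : ℝ, pd1 f a b = D1 F (a, b) := fun a b => (hasDerivAt_D1 h4d a b).deriv
  have ep2 : ∀ a b : ℝ, pd2 f a b = D2 F (a, b) := fun a b => (hasDerivAt_D2 h4d a b).deriv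
  have eH : ∀ a b : ℝ, pd2 (pd1 f) a b = D2 (D1 F) (a, b) := by
    intro a b
    have hfun : (fun t => pd1 f a t) = fun t => D1 F (a, t) := funext fun t => ep1 a t
    show deriv (fun t => pd1 f a t) b = _
    rw [hfun]; exact (hasDerivAt_D2 h1d a b).deriv
  have eE : ∀ a b : ℝ, pd1 (pd1 f) a b = D1 (D1 F) (a, b) := by
    intro a b
    have hfun : (fun t => pd1 f t b) = fun t => D1 F (t, b) := funext fun t => ep1 t b
    show deriv (fun t => pd1 f t b) a = _
    rw [hfun]; exact (hasDerivAt_D1 h1d a b).deriv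
  have eA : ∀ a b : ℝ, pd1 (pd2 (pd1 f)) a b = D1 (D2 (D1 F)) (a, b) := by
    intro a b
    have hfun : (fun t => pd2 (pd1 f) t b) = fun t => D2 (D1 F) (t, b) := funext fun t => eH t b
    show deriv (fun t => pd2 (pd1 f) t b) a = _
    rw [hfun]; exact (hasDerivAt_D1 hHd a b).deriv
  have e22 : ∀ a b : ℝ, pd2 (pd2 f) a b = D2 (D2 F) (a, b) := by
    intro a b
    have hfun : (fun t => pd2 f a t) = fun t => D2 F (a, t) := funext fun t => ep2 a t
    show deriv (fun t => pd2 f a t) b = _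
    rw [hfun]; exact (hasDerivAt_D2 h2d a b).deriv
  have eW : ∀ a b : ℝ, pd2 (pd2 (pd1 f)) a b = D2 (D2 (D1 F)) (a, b) := by
    intro a b
    have hfun : (fun t => pd2 (pd1 f) a t) = fun t => D2 (D1 F) (a, t) := funext fun t => eH a t
    show deriv (fun t => pd2 (pd1 f) a t) b = _
    rw [hfun]; exact (hasDerivAt_D2 hHd a b).deriv
  have eQ : ∀ a b : ℝ, pd1 (pd2 (pd2 (pd1 f))) a b = D1 (D2 (D2 (D1 F))) (a, b) := by
    intro a b
    have hfun : (fun t => pd2 (pd2 (pd1 f)) t b) = fun t => D2 (D2 (D1 F)) (t, b) :=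
      funext fun t => eW t b
    show deriv (fun t => pd2 (pd2 (pd1 f)) t b) a = _
    rw [hfun]; exact (hasDerivAt_D1 hWd a b).deriv
  -- base values
  have hF00 : F (0, 0) = 0 := h0
  have hD1F00 : D1 F (0, 0) = 0 := by rw [← ep1]; exact h1
  have hD2F00 : D2 F (0, 0) = 0 := by rw [← ep2]; exact h2
  have hH00 : D2 (D1 F) (0, 0) = 0 := by rw [← eH]; exact h12
  -- Core identity via interval integrals
  have stepA : (∫ s in (0:ℝ)..x, D1 F (s, y)) = F (x, y) - F (0, y) :=
    ftc0 (fun s => hasDerivAt_D1 h4d s y) (cont_slice1 hF1.continuous y) x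
  have stepB : F (0, y) = F (0, 0) + y * D2 F (0, 0)
      + ∫ r in (0:ℝ)..y, (y - r) * D2 (D2 F) (0, r) :=
    taylor2 (fun t => hasDerivAt_D2 h4d 0 t) (fun t => hasDerivAt_D2 h2d 0 t)
      (cont_slice2 hF22.continuous 0) y
  have stepC : ∀ s : ℝ, D1 F (s, y) = D1 F (s, 0) + y * D2 (D1 F) (s, 0)
      + ∫ r in (0:ℝ)..y, (y - r) * D2 (D2 (D1 F)) (s, r) :=
    fun s => taylor2 (fun t => hasDerivAt_D2 h1d s t) (fun t => hasDerivAt_D2 hHd s t)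
      (cont_slice2 hW1.continuous s) y
  have expand1 : ∀ s : ℝ, D1 F (s, 0) = ∫ k in (0:ℝ)..s, D1 (D1 F) (k, 0) := by
    intro s
    have h : (∫ k in (0:ℝ)..s, D1 (D1 F) (k, 0)) = D1 F (s, 0) - D1 F (0, 0) :=
      ftc0 (fun t => hasDerivAt_D1 h1d t 0) (cont_slice1 hE2.continuous 0) s
    rw [hD1F00] at h; linarith
  have expand2 : ∀ s : ℝ, D2 (D1 F) (s, 0) = ∫ k in (0:ℝ)..s, D1 (D2 (D1 F)) (k, 0) := by
    intro s
    have h : (∫ k in (0:ℝ)..s, D1 (D2 (D1 F)) (k, 0)) = D2 (D1 F) (s, 0) - D2 (D1 F) (0, 0) :=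
      ftc0 (fun t => hasDerivAt_D1 hHd t 0) (cont_slice1 hA1.continuous 0) s
    rw [hH00] at h; linarith
  have expandW : ∀ s r : ℝ, D2 (D2 (D1 F)) (s, r)
      = D2 (D2 (D1 F)) (0, r) + ∫ k in (0:ℝ)..s, D1 (D2 (D2 (D1 F))) (k, r) := by
    intro s r
    have h : (∫ k in (0:ℝ)..s, D1 (D2 (D2 (D1 F))) (k, r))
        = D2 (D2 (D1 F)) (s, r) - D2 (D2 (D1 F)) (0, r) :=
      ftc0 (fun t => hasDerivAt_D1 hWd t r) (cont_slice1 hQc r) s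
    linarith
  have contQs : ∀ s : ℝ, Continuous fun r : ℝ => ∫ k in (0:ℝ)..s, D1 (D2 (D2 (D1 F))) (k, r) := by
    intro s; fun_prop
  have contC : Continuous fun s : ℝ => ∫ r in (0:ℝ)..y, (y - r) * D2 (D2 (D1 F)) (s, r) := by
    fun_prop
  have hsplitx : (∫ s in (0:ℝ)..x, D1 F (s, y))
      = (∫ s in (0:ℝ)..x, D1 F (s, 0)) + (∫ s in (0:ℝ)..x, y * D2 (D1 F) (s, 0))
        + ∫ s in (0:ℝ)..x, ∫ r in (0:ℝ)..y, (y - r) * D2 (D2 (D1 F)) (s, r) := by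
    have i1 : IntervalIntegrable (fun s => D1 F (s, 0)) volume 0 x :=
      (cont_slice1 hF1.continuous 0).intervalIntegrable 0 x
    have i2 : IntervalIntegrable (fun s => y * D2 (D1 F) (s, 0)) volume 0 x :=
      (continuous_const.mul (cont_slice1 hH2.continuous 0)).intervalIntegrable 0 x
    have i3 : IntervalIntegrable
        (fun s => ∫ r in (0:ℝ)..y, (y - r) * D2 (D2 (D1 F)) (s, r)) volume 0 x :=
      contC.intervalIntegrable 0 x
    rw [← intervalIntegral.integral_add i1 i2, ← intervalIntegral.integral_add (i1.add i2) i3]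
    exact intervalIntegral.integral_congr fun s _ => stepC s
  have t1 : (∫ s in (0:ℝ)..x, D1 F (s, 0)) = ∫ k in (0:ℝ)..x, (x - k) * D1 (D1 F) (k, 0) :=
    (intervalIntegral.integral_congr fun s _ => expand1 s).trans
      (swap_kernel (cont_slice1 hE2.continuous 0) x)
  have t2 : (∫ s in (0:ℝ)..x, y * D2 (D1 F) (s, 0))
      = y * ∫ k in (0:ℝ)..x, (x - k) * D1 (D2 (D1 F)) (k, 0) := by
    rw [intervalIntegral.integral_const_mul]
    exact congrArg (y * ·) ((intervalIntegral.integral_congr fun s _ => expand2 s).trans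
      (swap_kernel (cont_slice1 hA1.continuous 0) x))
  -- third piece
  have hΦc : Continuous fun p : ℝ × ℝ =>
      (y - p.2) * ∫ k in (0:ℝ)..p.1, D1 (D2 (D2 (D1 F))) (k, p.2) := by fun_prop
  have t3 : (∫ s in (0:ℝ)..x, ∫ r in (0:ℝ)..y, (y - r) * D2 (D2 (D1 F)) (s, r))
      = x * (∫ r in (0:ℝ)..y, (y - r) * D2 (D2 (D1 F)) (0, r))
        + ∫ r in (0:ℝ)..y, (y - r) * ∫ k in (0:ℝ)..x, (x - k) * D1 (D2 (D2 (D1 F))) (k, r) := by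
    have inner : ∀ s : ℝ, (∫ r in (0:ℝ)..y, (y - r) * D2 (D2 (D1 F)) (s, r))
        = (∫ r in (0:ℝ)..y, (y - r) * D2 (D2 (D1 F)) (0, r))
          + ∫ r in (0:ℝ)..y, (y - r) * ∫ k in (0:ℝ)..s, D1 (D2 (D2 (D1 F))) (k, r) := by
      intro s
      have j1 : IntervalIntegrable (fun r => (y - r) * D2 (D2 (D1 F)) (0, r)) volume 0 y :=
        ((continuous_const.sub continuous_id).mul (cont_slice2 hW1.continuous 0)).intervalIntegrable 0 y
      have j2 : IntervalIntegrable
          (fun r => (y - r) * ∫ k in (0:ℝ)..s, D1 (D2 (D2 (D1 F))) (k, r)) volume 0 y :=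
        ((continuous_const.sub continuous_id).mul (contQs s)).intervalIntegrable 0 y
      rw [← intervalIntegral.integral_add j1 j2]
      apply intervalIntegral.integral_congr
      intro r _
      show (y - r) * D2 (D2 (D1 F)) (s, r)
          = (y - r) * D2 (D2 (D1 F)) (0, r)
            + (y - r) * ∫ k in (0:ℝ)..s, D1 (D2 (D2 (D1 F))) (k, r)
      rw [expandW s r]
      ring
    rw [intervalIntegral.integral_congr fun s _ => inner s]
    have hΨc : Continuous fun s : ℝ =>
        ∫ r in (0:ℝ)..y, (y - r) * ∫ k in (0:ℝ)..s, D1 (D2 (D2 (D1 F))) (k, r) := by fun_prop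
    rw [intervalIntegral.integral_add intervalIntegrable_const (hΨc.intervalIntegrable 0 x),
      intervalIntegral.integral_const, smul_eq_mul, sub_zero]
    congr 1
    have hfub : (∫ s in (0:ℝ)..x, ∫ r in (0:ℝ)..y,
          (y - r) * ∫ k in (0:ℝ)..s, D1 (D2 (D2 (D1 F))) (k, r))
        = ∫ r in (0:ℝ)..y, ∫ s in (0:ℝ)..x,
          (y - r) * ∫ k in (0:ℝ)..s, D1 (D2 (D2 (D1 F))) (k, r) :=
      fubini_cont hΦc hx hy
    rw [hfub]
    apply intervalIntegral.integral_congr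
    intro r _
    show (∫ s in (0:ℝ)..x, (y - r) * ∫ k in (0:ℝ)..s, D1 (D2 (D2 (D1 F))) (k, r))
        = (y - r) * ∫ k in (0:ℝ)..x, (x - k) * D1 (D2 (D2 (D1 F))) (k, r)
    rw [intervalIntegral.integral_const_mul]
    exact congrArg ((y - r) * ·) (swap_kernel (cont_slice1 hQc r) x)
  have core : F (x, y) = (∫ k in (0:ℝ)..x, (x - k) * D1 (D1 F) (k, 0))
      + y * (∫ k in (0:ℝ)..x, (x - k) * D1 (D2 (D1 F)) (k, 0))
      + ((∫ r in (0:ℝ)..y, (y - r) * D2 (D2 F) (0, r))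
        + x * (∫ r in (0:ℝ)..y, (y - r) * D2 (D2 (D1 F)) (0, r)))
      + ∫ r in (0:ℝ)..y, (y - r) * ∫ k in (0:ℝ)..x, (x - k) * D1 (D2 (D2 (D1 F))) (k, r) := by
    have hA' := stepA
    rw [hsplitx, t1, t2, t3] at hA'
    rw [stepB, hF00, hD2F00] at hA'
    linarith
  -- Now convert the goal's Ioi integrals
  simp only [eE, eA, e22, eW, eQ]
  have hmaxx : Continuous fun k : ℝ => max (x - k) 0 :=
    (continuous_const.sub continuous_id).max continuous_const
  have hmaxy : Continuous fun k : ℝ => max (y - k) 0 :=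
    (continuous_const.sub continuous_id).max continuous_const
  have hT1 : (∫ k₁ in Ioi (0:ℝ), (D1 (D1 F) (k₁, 0) * max (x - k₁) 0
      + D1 (D2 (D1 F)) (k₁, 0) * y * max (x - k₁) 0))
      = (∫ k in (0:ℝ)..x, (x - k) * D1 (D1 F) (k, 0))
        + y * ∫ k in (0:ℝ)..x, (x - k) * D1 (D2 (D1 F)) (k, 0) := by
    rw [integral_Ioi_eq_intervalIntegral (by fun_prop) hx
      (fun k hk => by
        show D1 (D1 F) (k, 0) * max (x - k) 0 + D1 (D2 (D1 F)) (k, 0) * y * max (x - k) 0 = 0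
        have hm : max (x - k) 0 = 0 := max_eq_right (by linarith)
        rw [hm]; ring)]
    rw [intervalIntegral.integral_congr
      (g := fun k => (x - k) * D1 (D1 F) (k, 0) + y * ((x - k) * D1 (D2 (D1 F)) (k, 0)))
      (fun k hk => by
        rw [uIcc_of_le hx] at hk
        show D1 (D1 F) (k, 0) * max (x - k) 0 + D1 (D2 (D1 F)) (k, 0) * y * max (x - k) 0
            = (x - k) * D1 (D1 F) (k, 0) + y * ((x - k) * D1 (D2 (D1 F)) (k, 0))
        have hm : max (x - k) 0 = x - k := max_eq_left (by linarith [hk.2])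
        rw [hm]; ring)]
    have i1 : IntervalIntegrable (fun k : ℝ => (x - k) * D1 (D1 F) (k, 0)) volume 0 x :=
      Continuous.intervalIntegrable (by fun_prop) 0 x
    have i2 : IntervalIntegrable (fun k : ℝ => y * ((x - k) * D1 (D2 (D1 F)) (k, 0))) volume 0 x :=
      Continuous.intervalIntegrable (by fun_prop) 0 x
    rw [intervalIntegral.integral_add i1 i2, intervalIntegral.integral_const_mul]
  have hT2 : (∫ k₂ in Ioi (0:ℝ), (D2 (D2 F) (0, k₂) * max (y - k₂) 0
      + D2 (D2 (D1 F)) (0, k₂) * x * max (y - k₂) 0))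
      = (∫ r in (0:ℝ)..y, (y - r) * D2 (D2 F) (0, r))
        + x * ∫ r in (0:ℝ)..y, (y - r) * D2 (D2 (D1 F)) (0, r) := by
    rw [integral_Ioi_eq_intervalIntegral (by fun_prop) hy
      (fun k hk => by
        show D2 (D2 F) (0, k) * max (y - k) 0 + D2 (D2 (D1 F)) (0, k) * x * max (y - k) 0 = 0
        have hm : max (y - k) 0 = 0 := max_eq_right (by linarith)
        rw [hm]; ring)]
    rw [intervalIntegral.integral_congr
      (g := fun r => (y - r) * D2 (D2 F) (0, r) + x * ((y - r) * D2 (D2 (D1 F)) (0, r)))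
      (fun r hr => by
        rw [uIcc_of_le hy] at hr
        show D2 (D2 F) (0, r) * max (y - r) 0 + D2 (D2 (D1 F)) (0, r) * x * max (y - r) 0
            = (y - r) * D2 (D2 F) (0, r) + x * ((y - r) * D2 (D2 (D1 F)) (0, r))
        have hm : max (y - r) 0 = y - r := max_eq_left (by linarith [hr.2])
        rw [hm]; ring)]
    have i1 : IntervalIntegrable (fun r : ℝ => (y - r) * D2 (D2 F) (0, r)) volume 0 y :=
      Continuous.intervalIntegrable (by fun_prop) 0 y
    have i2 : IntervalIntegrable (fun r : ℝ => x * ((y - r) * D2 (D2 (D1 F)) (0, r))) volume 0 y :=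
      Continuous.intervalIntegrable (by fun_prop) 0 y
    rw [intervalIntegral.integral_add i1 i2, intervalIntegral.integral_const_mul]
  have hinner3 : ∀ r : ℝ, (∫ k₁ in Ioi (0:ℝ),
      D1 (D2 (D2 (D1 F))) (k₁, r) * max (x - k₁) 0 * max (y - r) 0)
      = max (y - r) 0 * ∫ k in (0:ℝ)..x, (x - k) * D1 (D2 (D2 (D1 F))) (k, r) := by
    intro r
    rw [integral_Ioi_eq_intervalIntegral (by fun_prop) hx
      (fun k hk => by
        show D1 (D2 (D2 (D1 F))) (k, r) * max (x - k) 0 * max (y - r) 0 = 0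
        have hm : max (x - k) 0 = 0 := max_eq_right (by linarith)
        rw [hm]; ring)]
    rw [intervalIntegral.integral_congr
      (g := fun k => max (y - r) 0 * ((x - k) * D1 (D2 (D2 (D1 F))) (k, r)))
      (fun k hk => by
        rw [uIcc_of_le hx] at hk
        show D1 (D2 (D2 (D1 F))) (k, r) * max (x - k) 0 * max (y - r) 0
            = max (y - r) 0 * ((x - k) * D1 (D2 (D2 (D1 F))) (k, r))
        have hm : max (x - k) 0 = x - k := max_eq_left (by linarith [hk.2])
        rw [hm]; ring)]
    rw [intervalIntegral.integral_const_mul]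
  have hT3 : (∫ k₂ in Ioi (0:ℝ), ∫ k₁ in Ioi (0:ℝ),
      D1 (D2 (D2 (D1 F))) (k₁, k₂) * max (x - k₁) 0 * max (y - k₂) 0)
      = ∫ r in (0:ℝ)..y, (y - r) * ∫ k in (0:ℝ)..x, (x - k) * D1 (D2 (D2 (D1 F))) (k, r) := by
    simp only [hinner3]
    rw [integral_Ioi_eq_intervalIntegral (by fun_prop) hy
      (fun r hr => by
        show max (y - r) 0 * ∫ k in (0:ℝ)..x, (x - k) * D1 (D2 (D2 (D1 F))) (k, r) = 0
        have hm : max (y - r) 0 = 0 := max_eq_right (by linarith)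
        rw [hm]; ring)]
    apply intervalIntegral.integral_congr
    intro r hr
    rw [uIcc_of_le hy] at hr
    show max (y - r) 0 * (∫ k in (0:ℝ)..x, (x - k) * D1 (D2 (D2 (D1 F))) (k, r))
        = (y - r) * ∫ k in (0:ℝ)..x, (x - k) * D1 (D2 (D2 (D1 F))) (k, r)
    have hm : max (y - r) 0 = y - r := max_eq_left (by linarith [hr.2])
    rw [hm]
  rw [hT1, hT2, hT3]
  have hfxy : f x y = F (x, y) := rfl
  rw [hfxy, core]
end

section
/- Let h(x,y) = (1/(2π))·exp(-(x²+y²)/2). Then for all x, y ≥ 0: h(x,y) = (1/(2π))·[1 + ∫_0^∞ (k₁²-1)·e^{-k₁²/2}·(x-k₁)_+ dk₁ + ∫_0^∞ (k₂²-1)·e^{-k₂²/2}·(y-k₂)_+ dk₂ + ∫_0^∞ ∫_0^∞ (1 + k₁²k₂² - k₁² - k₂²)·e^{-(k₁²+k₂²)/2}·(x-k₁)_+·(y-k₂)_+ dk₁ dk₂]. -/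
open MeasureTheory Set Real

lemma key_int (x : ℝ) (hx : 0 ≤ x) :
    (∫ k in Set.Ioi (0:ℝ), (k ^ 2 - 1) * Real.exp (-(k ^ 2) / 2) * max (x - k) 0)
      = Real.exp (-(x ^ 2) / 2) - 1 := by
  have hsplit : Set.Ioi (0:ℝ) = Set.Ioc 0 x ∪ Set.Ioi x := (Set.Ioc_union_Ioi_eq_Ioi hx).symm
  have hcont : Continuous fun k : ℝ => (k ^ 2 - 1) * Real.exp (-(k ^ 2) / 2) * max (x - k) 0 := by
    continuity
  have hint1 : IntegrableOn (fun k : ℝ => (k ^ 2 - 1) * Real.exp (-(k ^ 2) / 2) * max (x - k) 0)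
      (Set.Ioc 0 x) := hcont.integrableOn_Ioc
  have hzero : ∀ k ∈ Set.Ioi x, (k ^ 2 - 1) * Real.exp (-(k ^ 2) / 2) * max (x - k) 0 = 0 := by
    intro k hk
    have : max (x - k) 0 = 0 := max_eq_right (by simp at hk; linarith)
    simp [this]
  have hint2 : IntegrableOn (fun k : ℝ => (k ^ 2 - 1) * Real.exp (-(k ^ 2) / 2) * max (x - k) 0)
      (Set.Ioi x) := by
    apply (integrableOn_congr_fun hzero measurableSet_Ioi).mpr
    simp [integrableOn_const]
  rw [hsplit, setIntegral_union (Set.Ioc_disjoint_Ioi le_rfl) measurableSet_Ioi hint1 hint2]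
  have h2 : (∫ k in Set.Ioi x, (k ^ 2 - 1) * Real.exp (-(k ^ 2) / 2) * max (x - k) 0) = 0 :=
    setIntegral_eq_zero_of_forall_eq_zero hzero
  rw [h2, add_zero]
  have hcongr : (∫ k in Set.Ioc (0:ℝ) x, (k ^ 2 - 1) * Real.exp (-(k ^ 2) / 2) * max (x - k) 0)
      = ∫ k in Set.Ioc (0:ℝ) x, (k ^ 2 - 1) * Real.exp (-(k ^ 2) / 2) * (x - k) := by
    apply setIntegral_congr_fun measurableSet_Ioc
    intro k hk
    have h3 : max (x - k) 0 = x - k := max_eq_left (by simp at hk; linarith [hk.2])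
    simp only [h3]
  rw [hcongr, ← intervalIntegral.integral_of_le hx]
  have hderiv : ∀ k ∈ Set.uIcc (0:ℝ) x,
      HasDerivAt (fun k : ℝ => -k * Real.exp (-(k ^ 2) / 2) * (x - k) + Real.exp (-(k ^ 2) / 2))
        ((k ^ 2 - 1) * Real.exp (-(k ^ 2) / 2) * (x - k)) k := by
    intro k _
    have he : HasDerivAt (fun k : ℝ => Real.exp (-(k ^ 2) / 2)) (-k * Real.exp (-(k ^ 2) / 2)) k := by
      have h1 : HasDerivAt (fun k : ℝ => -(k ^ 2) / 2) (-k) k := by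
        have := (hasDerivAt_pow 2 k).neg.div_const 2
        exact this.congr_deriv (by push_cast; ring)
      have := h1.exp
      convert this using 1; ring
    have hA : HasDerivAt (fun k : ℝ => -k * Real.exp (-(k ^ 2) / 2))
        ((k ^ 2 - 1) * Real.exp (-(k ^ 2) / 2)) k := by
      have := ((hasDerivAt_id k).neg.mul he)
      exact this.congr_deriv (by simp only [Pi.neg_apply, id_eq]; ring)
    have hB : HasDerivAt (fun k : ℝ => x - k) (-1) k := by
      simpa using ((hasDerivAt_id k).const_sub x)
    have := (hA.mul hB).add he
    exact this.congr_deriv (by ring)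
  have hcint : IntervalIntegrable
      (fun k : ℝ => (k ^ 2 - 1) * Real.exp (-(k ^ 2) / 2) * (x - k)) volume 0 x :=
    (by continuity : Continuous fun k : ℝ => (k ^ 2 - 1) * Real.exp (-(k ^ 2) / 2) * (x - k)).intervalIntegrable 0 x
  rw [intervalIntegral.integral_eq_sub_of_hasDerivAt hderiv hcint]
  norm_num

theorem gaussian_replication (x y : ℝ) (hx : 0 ≤ x) (hy : 0 ≤ y) :
    (1 / (2 * π)) * Real.exp (-(x ^ 2 + y ^ 2) / 2)
      = (1 / (2 * π)) *
        (1 + (∫ k₁ in Set.Ioi (0:ℝ), (k₁ ^ 2 - 1) * Real.exp (-(k₁ ^ 2) / 2) * max (x - k₁) 0)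
           + (∫ k₂ in Set.Ioi (0:ℝ), (k₂ ^ 2 - 1) * Real.exp (-(k₂ ^ 2) / 2) * max (y - k₂) 0)
           + ∫ k₂ in Set.Ioi (0:ℝ), ∫ k₁ in Set.Ioi (0:ℝ),
               (1 + k₁ ^ 2 * k₂ ^ 2 - k₁ ^ 2 - k₂ ^ 2)
                 * Real.exp (-(k₁ ^ 2 + k₂ ^ 2) / 2) * max (x - k₁) 0 * max (y - k₂) 0) := by
  have hx' := key_int x hx
  have hy' := key_int y hy
  have hdouble : (∫ k₂ in Set.Ioi (0:ℝ), ∫ k₁ in Set.Ioi (0:ℝ),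
               (1 + k₁ ^ 2 * k₂ ^ 2 - k₁ ^ 2 - k₂ ^ 2)
                 * Real.exp (-(k₁ ^ 2 + k₂ ^ 2) / 2) * max (x - k₁) 0 * max (y - k₂) 0)
      = (Real.exp (-(x ^ 2) / 2) - 1) * (Real.exp (-(y ^ 2) / 2) - 1) := by
    have hpt : ∀ k₂ k₁ : ℝ,
        (1 + k₁ ^ 2 * k₂ ^ 2 - k₁ ^ 2 - k₂ ^ 2)
          * Real.exp (-(k₁ ^ 2 + k₂ ^ 2) / 2) * max (x - k₁) 0 * max (y - k₂) 0
        = ((k₂ ^ 2 - 1) * Real.exp (-(k₂ ^ 2) / 2) * max (y - k₂) 0)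
          * ((k₁ ^ 2 - 1) * Real.exp (-(k₁ ^ 2) / 2) * max (x - k₁) 0) := by
      intro k₂ k₁
      rw [show -(k₁ ^ 2 + k₂ ^ 2) / 2 = -(k₂ ^ 2) / 2 + -(k₁ ^ 2) / 2 by ring, Real.exp_add]
      ring
    have : ∀ k₂ : ℝ, (∫ k₁ in Set.Ioi (0:ℝ),
        (1 + k₁ ^ 2 * k₂ ^ 2 - k₁ ^ 2 - k₂ ^ 2)
          * Real.exp (-(k₁ ^ 2 + k₂ ^ 2) / 2) * max (x - k₁) 0 * max (y - k₂) 0)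
        = ((k₂ ^ 2 - 1) * Real.exp (-(k₂ ^ 2) / 2) * max (y - k₂) 0) * (Real.exp (-(x ^ 2) / 2) - 1) := by
      intro k₂
      simp_rw [hpt k₂]
      rw [MeasureTheory.integral_const_mul, hx']
    simp_rw [this]
    rw [integral_mul_const, hy']
    ring
  rw [hdouble, hx', hy']
  rw [show -(x ^ 2 + y ^ 2) / 2 = -(x ^ 2) / 2 + -(y ^ 2) / 2 by ring, Real.exp_add]
  ring
end

section
/- Let X = (S₁, S₂) be an ℝ≥0²-valued random vector whose law has a continuous density q : ℝ≥0² → ℝ≥0 with respect to Lebesgue measure. Define P(k₁,k₂) = E[(k₁-S₁)_+·(k₂-S₂)_+] for k₁,k₂ > 0. Then P is four times differentiable in (k₁,k₂) and ∂⁴P/∂k₁∂k₂∂k₁∂k₂ (k₁,k₂) = q(k₁,k₂) for all k₁,k₂ > 0. -/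
open MeasureTheory Set
open scoped ENNReal NNReal

namespace BLaux

/-- Cauchy formula for repeated integration. -/
lemma cauchy_repeat {s : ℝ → ℝ} (hs : Continuous s) (b : ℝ) :
    (∫ y in (0:ℝ)..b, (b - y) * s y) = ∫ v in (0:ℝ)..b, ∫ y in (0:ℝ)..v, s y := by
  have h1 : ∀ c : ℝ, (∫ y in (0:ℝ)..c, (c - y) * s y)
      = c * (∫ y in (0:ℝ)..c, s y) - ∫ y in (0:ℝ)..c, y * s y := by
    intro c
    have he : ∀ y, (c - y) * s y = c * s y - y * s y := fun y => by ring
    simp_rw [he]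
    rw [intervalIntegral.integral_sub (f := fun y => c * s y) (g := fun y => y * s y) ((continuous_const.mul hs).intervalIntegrable _ _)
      (Continuous.intervalIntegrable (by fun_prop) _ _),
      intervalIntegral.integral_const_mul]
  rw [h1]
  set I : ℝ → ℝ := fun c => ∫ y in (0:ℝ)..c, s y with hIdef
  set J : ℝ → ℝ := fun c => ∫ y in (0:ℝ)..c, y * s y with hJdef
  set K : ℝ → ℝ := fun c => ∫ v in (0:ℝ)..c, I v with hKdef
  have hIc : Continuous I := intervalIntegral.continuous_primitive
    (fun a b => hs.intervalIntegrable a b) 0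
  have hΦ : ∀ c : ℝ, HasDerivAt (fun c => c * I c - J c - K c) 0 c := by
    intro c
    have hI : HasDerivAt I (s c) c := (hs.integral_hasStrictDerivAt 0 c).hasDerivAt
    have hJ : HasDerivAt J (c * s c) c :=
      (Continuous.integral_hasStrictDerivAt (f := fun y : ℝ => y * s y)
        (by fun_prop) 0 c).hasDerivAt
    have hK : HasDerivAt K (I c) c := (hIc.integral_hasStrictDerivAt 0 c).hasDerivAt
    have h := (((hasDerivAt_id c).mul hI).sub hJ).sub hK
    exact h.congr_deriv (by simp [id_eq])
  have h0 : b * I b - J b - K b = 0 * I 0 - J 0 - K 0 :=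
    is_const_of_deriv_eq_zero (fun c => (hΦ c).differentiableAt) (fun c => (hΦ c).deriv) b 0
  have hI0 : I 0 = 0 := intervalIntegral.integral_same
  have hJ0 : J 0 = 0 := intervalIntegral.integral_same
  have hK0 : K 0 = 0 := intervalIntegral.integral_same
  rw [hI0, hJ0, hK0] at h0
  show b * I b - J b = K b
  linarith

/-- Fubini swap for continuous integrands on a rectangle with nonnegative endpoints. -/
lemma swap_integral {D : ℝ × ℝ → ℝ} (hD : Continuous D) {u b : ℝ} (hu : 0 ≤ u)
    (hb : 0 ≤ b) :
    (∫ x in (0:ℝ)..u, ∫ v in (0:ℝ)..b, D (x, v)) = ∫ v in (0:ℝ)..b, ∫ x in (0:ℝ)..u, D (x, v) := by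
  have key : IntegrableOn (Function.uncurry fun x v => D (x, v))
      (Ioc (0:ℝ) u ×ˢ Ioc (0:ℝ) b) volume := by
    have h2 : IntegrableOn D (Icc (0:ℝ) u ×ˢ Icc (0:ℝ) b) volume :=
      hD.continuousOn.integrableOn_compact (isCompact_Icc.prod isCompact_Icc)
    exact h2.mono_set (prod_mono Ioc_subset_Icc_self Ioc_subset_Icc_self)
  simp_rw [intervalIntegral.integral_of_le hu, intervalIntegral.integral_of_le hb]
  exact integral_integral_swap (by rw [Measure.prod_restrict, ← Measure.volume_eq_prod]; exact key)

variable {q' : ℝ × ℝ → ℝ}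

noncomputable def DD (q' : ℝ × ℝ → ℝ) : ℝ × ℝ → ℝ := fun p => ∫ y in (0:ℝ)..p.2, q' (p.1, y)

noncomputable def TT (q' : ℝ × ℝ → ℝ) : ℝ × ℝ → ℝ := fun p => ∫ x in (0:ℝ)..p.1, DD q' (x, p.2)

lemma DD_cont (hc : Continuous q') : Continuous (DD q') := by
  apply intervalIntegral.continuous_parametric_intervalIntegral_of_continuous
    (f := fun (p : ℝ × ℝ) (t : ℝ) => q' (p.1, t)) ?_ continuous_snd
  exact hc.comp ((continuous_fst.comp continuous_fst).prodMk continuous_snd)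

lemma TT_cont (hc : Continuous q') : Continuous (TT q') := by
  apply intervalIntegral.continuous_parametric_intervalIntegral_of_continuous
    (f := fun (p : ℝ × ℝ) (t : ℝ) => DD q' (t, p.2)) ?_ continuous_fst
  exact (DD_cont hc).comp (continuous_snd.prodMk (continuous_snd.comp continuous_fst))

lemma PT (hc : Continuous q') (P : ℝ → ℝ → ℝ)
    (hP : ∀ a b : ℝ, 0 < a → 0 < b →
      P a b = ∫ x in (0:ℝ)..a, ∫ y in (0:ℝ)..b, (a - x) * ((b - y) * q' (x, y)))
    {a b : ℝ} (ha : 0 < a) (hb : 0 < b) :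
    P a b = ∫ u in (0:ℝ)..a, ∫ v in (0:ℝ)..b, TT q' (u, v) := by
  rw [hP a b ha hb]
  have hstep1 : ∀ x : ℝ, (∫ y in (0:ℝ)..b, (a - x) * ((b - y) * q' (x, y)))
      = (a - x) * ∫ v in (0:ℝ)..b, DD q' (x, v) := by
    intro x
    rw [intervalIntegral.integral_const_mul]
    congr 1
    exact cauchy_repeat (hc.comp (continuous_const.prodMk continuous_id)) b
  simp_rw [hstep1]
  have hscont : Continuous fun x => ∫ v in (0:ℝ)..b, DD q' (x, v) := by
    apply intervalIntegral.continuous_parametric_intervalIntegral_of_continuous'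
      (f := fun (x : ℝ) (v : ℝ) => DD q' (x, v))
    exact (DD_cont hc).comp (continuous_fst.prodMk continuous_snd)
  rw [cauchy_repeat hscont a]
  apply intervalIntegral.integral_congr
  intro u hu
  have hu0 : 0 ≤ u := by
    rw [uIcc_of_le ha.le] at hu; exact hu.1
  calc (∫ x in (0:ℝ)..u, ∫ v in (0:ℝ)..b, DD q' (x, v))
      = ∫ v in (0:ℝ)..b, ∫ x in (0:ℝ)..u, DD q' (x, v) :=
        swap_integral (DD_cont hc) hu0 hb.le
    _ = ∫ v in (0:ℝ)..b, TT q' (u, v) := rfl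

lemma hasDeriv1 (hc : Continuous q') (P : ℝ → ℝ → ℝ)
    (hP : ∀ a b : ℝ, 0 < a → 0 < b →
      P a b = ∫ x in (0:ℝ)..a, ∫ y in (0:ℝ)..b, (a - x) * ((b - y) * q' (x, y)))
    {a b : ℝ} (ha : 0 < a) (hb : 0 < b) :
    HasDerivAt (fun t => P t b) (∫ v in (0:ℝ)..b, TT q' (a, v)) a := by
  have hφ : Continuous fun u => ∫ v in (0:ℝ)..b, TT q' (u, v) := by
    apply intervalIntegral.continuous_parametric_intervalIntegral_of_continuous'
      (f := fun (u : ℝ) (v : ℝ) => TT q' (u, v))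
    exact (TT_cont hc).comp (continuous_fst.prodMk continuous_snd)
  have h := (hφ.integral_hasStrictDerivAt 0 a).hasDerivAt
  apply h.congr_of_eventuallyEq
  filter_upwards [Ioi_mem_nhds ha] with t ht
  exact PT hc P hP ht hb

lemma pd1_eq (hc : Continuous q') (P : ℝ → ℝ → ℝ)
    (hP : ∀ a b : ℝ, 0 < a → 0 < b →
      P a b = ∫ x in (0:ℝ)..a, ∫ y in (0:ℝ)..b, (a - x) * ((b - y) * q' (x, y)))
    {a b : ℝ} (ha : 0 < a) (hb : 0 < b) :
    pd1 P a b = ∫ v in (0:ℝ)..b, TT q' (a, v) :=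
  (hasDeriv1 hc P hP ha hb).deriv

lemma hasDeriv2 (hc : Continuous q') (P : ℝ → ℝ → ℝ)
    (hP : ∀ a b : ℝ, 0 < a → 0 < b →
      P a b = ∫ x in (0:ℝ)..a, ∫ y in (0:ℝ)..b, (a - x) * ((b - y) * q' (x, y)))
    {a b : ℝ} (ha : 0 < a) (hb : 0 < b) :
    HasDerivAt (fun t => pd1 P a t) (TT q' (a, b)) b := by
  have hφ : Continuous fun v => TT q' (a, v) :=
    (TT_cont hc).comp (continuous_const.prodMk continuous_id)
  have h := (hφ.integral_hasStrictDerivAt 0 b).hasDerivAt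
  apply h.congr_of_eventuallyEq
  filter_upwards [Ioi_mem_nhds hb] with t ht
  exact pd1_eq hc P hP ha ht

lemma pd21_eq (hc : Continuous q') (P : ℝ → ℝ → ℝ)
    (hP : ∀ a b : ℝ, 0 < a → 0 < b →
      P a b = ∫ x in (0:ℝ)..a, ∫ y in (0:ℝ)..b, (a - x) * ((b - y) * q' (x, y)))
    {a b : ℝ} (ha : 0 < a) (hb : 0 < b) :
    pd2 (pd1 P) a b = TT q' (a, b) :=
  (hasDeriv2 hc P hP ha hb).deriv

lemma hasDeriv3 (hc : Continuous q') (P : ℝ → ℝ → ℝ)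
    (hP : ∀ a b : ℝ, 0 < a → 0 < b →
      P a b = ∫ x in (0:ℝ)..a, ∫ y in (0:ℝ)..b, (a - x) * ((b - y) * q' (x, y)))
    {a b : ℝ} (ha : 0 < a) (hb : 0 < b) :
    HasDerivAt (fun t => pd2 (pd1 P) t b) (DD q' (a, b)) a := by
  have hφ : Continuous fun x => DD q' (x, b) :=
    (DD_cont hc).comp (continuous_id.prodMk continuous_const)
  have h := (hφ.integral_hasStrictDerivAt 0 a).hasDerivAt
  apply h.congr_of_eventuallyEq
  filter_upwards [Ioi_mem_nhds ha] with t ht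
  exact pd21_eq hc P hP ht hb

lemma pd121_eq (hc : Continuous q') (P : ℝ → ℝ → ℝ)
    (hP : ∀ a b : ℝ, 0 < a → 0 < b →
      P a b = ∫ x in (0:ℝ)..a, ∫ y in (0:ℝ)..b, (a - x) * ((b - y) * q' (x, y)))
    {a b : ℝ} (ha : 0 < a) (hb : 0 < b) :
    pd1 (pd2 (pd1 P)) a b = DD q' (a, b) :=
  (hasDeriv3 hc P hP ha hb).deriv

lemma hasDeriv4 (hc : Continuous q') (P : ℝ → ℝ → ℝ)
    (hP : ∀ a b : ℝ, 0 < a → 0 < b →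
      P a b = ∫ x in (0:ℝ)..a, ∫ y in (0:ℝ)..b, (a - x) * ((b - y) * q' (x, y)))
    {a b : ℝ} (ha : 0 < a) (hb : 0 < b) :
    HasDerivAt (fun t => pd1 (pd2 (pd1 P)) a t) (q' (a, b)) b := by
  have hφ : Continuous fun y => q' (a, y) :=
    hc.comp (continuous_const.prodMk continuous_id)
  have h := (hφ.integral_hasStrictDerivAt 0 b).hasDerivAt
  apply h.congr_of_eventuallyEq
  filter_upwards [Ioi_mem_nhds hb] with t ht
  exact pd121_eq hc P hP ha ht

lemma master (hc : Continuous q') (P : ℝ → ℝ → ℝ)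
    (hP : ∀ a b : ℝ, 0 < a → 0 < b →
      P a b = ∫ x in (0:ℝ)..a, ∫ y in (0:ℝ)..b, (a - x) * ((b - y) * q' (x, y)))
    {k₁ k₂ : ℝ} (hk₁ : 0 < k₁) (hk₂ : 0 < k₂) :
    DifferentiableAt ℝ (fun t => P t k₂) k₁ ∧
      DifferentiableAt ℝ (fun t => pd1 P k₁ t) k₂ ∧
      DifferentiableAt ℝ (fun t => pd2 (pd1 P) t k₂) k₁ ∧
      DifferentiableAt ℝ (fun t => pd1 (pd2 (pd1 P)) k₁ t) k₂ ∧
      pd2 (pd1 (pd2 (pd1 P))) k₁ k₂ = q' (k₁, k₂) :=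
  ⟨(hasDeriv1 hc P hP hk₁ hk₂).differentiableAt,
   (hasDeriv2 hc P hP hk₁ hk₂).differentiableAt,
   (hasDeriv3 hc P hP hk₁ hk₂).differentiableAt,
   (hasDeriv4 hc P hP hk₁ hk₂).differentiableAt,
   (hasDeriv4 hc P hP hk₁ hk₂).deriv⟩

lemma P_eq {Ω : Type*} [MeasureSpace Ω] [IsProbabilityMeasure (volume : Measure Ω)]
    (S₁ S₂ : Ω → ℝ) (hm : Measurable fun ω => (S₁ ω, S₂ ω))
    (hS₁ : ∀ ω, 0 ≤ S₁ ω) (hS₂ : ∀ ω, 0 ≤ S₂ ω)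
    (q : ℝ → ℝ → ℝ) (hq0 : ∀ x y, 0 ≤ q x y)
    (hqc : ContinuousOn (fun p : ℝ × ℝ => q p.1 p.2) (Set.Ici 0 ×ˢ Set.Ici 0))
    (hlaw : Measure.map (fun ω => (S₁ ω, S₂ ω)) volume
      = volume.withDensity fun p : ℝ × ℝ => ENNReal.ofReal (q p.1 p.2))
    (q' : ℝ × ℝ → ℝ) (hq'def : q' = fun p => q (max p.1 0) (max p.2 0))
    (hq'c : Continuous q') {a b : ℝ} (ha : 0 < a) (hb : 0 < b) :
    (∫ ω, max (a - S₁ ω) 0 * max (b - S₂ ω) 0)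
      = ∫ x in (0:ℝ)..a, ∫ y in (0:ℝ)..b, (a - x) * ((b - y) * q' (x, y)) := by
  have hq'0 : ∀ p, 0 ≤ q' p := fun p => by rw [hq'def]; exact hq0 _ _
  set Q : Set (ℝ × ℝ) := Ici (0:ℝ) ×ˢ Ici (0:ℝ) with hQdef
  have hQ : MeasurableSet Q := measurableSet_Ici.prod measurableSet_Ici
  set f : ℝ × ℝ → ℝ := fun p => max (a - p.1) 0 * max (b - p.2) 0 with hfdef
  have hf : Continuous f := by
    apply Continuous.mul
    · exact (continuous_const.sub continuous_fst).max continuous_const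
    · exact (continuous_const.sub continuous_snd).max continuous_const
  set ν : Measure (ℝ × ℝ) := Measure.map (fun ω => (S₁ ω, S₂ ω)) volume with hνdef
  have h1 : (∫ ω, max (a - S₁ ω) 0 * max (b - S₂ ω) 0) = ∫ p, f p ∂ν :=
    (integral_map hm.aemeasurable hf.aestronglyMeasurable).symm
  have hcompl : ν Qᶜ = 0 := by
    have hpre : (fun ω => (S₁ ω, S₂ ω)) ⁻¹' Qᶜ = ∅ := by
      ext ω
      simp only [mem_preimage, mem_compl_iff, hQdef, mem_prod, mem_Ici, mem_empty_iff_false,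
        iff_false, not_not]
      exact ⟨hS₁ ω, hS₂ ω⟩
    rw [hνdef, Measure.map_apply hm hQ.compl, hpre, measure_empty]
  have hae : ∀ᵐ (p : ℝ × ℝ) ∂ν, p ∈ Q := by
    rw [ae_iff]
    exact hcompl
  have h2 : ∫ p, f p ∂ν = ∫ p in Q, f p ∂ν := by
    rw [Measure.restrict_eq_self_of_ae_mem hae]
  have h4 : ν.restrict Q = (volume.restrict Q).withDensity
      (fun p => ((q' p).toNNReal : ℝ≥0∞)) := by
    rw [hlaw, restrict_withDensity hQ]
    apply withDensity_congr_ae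
    refine (ae_restrict_iff' hQ).2 (Filter.Eventually.of_forall fun p hp => ?_)
    have h1' : max p.1 0 = p.1 := max_eq_left hp.1
    have h2' : max p.2 0 = p.2 := max_eq_left hp.2
    rw [hq'def]
    simp only [h1', h2']
    rfl
  have hmeas : Measurable fun p : ℝ × ℝ => (q' p).toNNReal :=
    (continuous_real_toNNReal.comp hq'c).measurable
  have h5 : ∫ p in Q, f p ∂ν = ∫ p in Q, q' p * f p := by
    rw [h4, integral_withDensity_eq_integral_smul hmeas f]
    apply setIntegral_congr_fun hQ
    intro p _
    show (q' p).toNNReal • f p = q' p * f p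
    rw [NNReal.smul_def, smul_eq_mul, Real.coe_toNNReal _ (hq'0 p)]
  set R : Set (ℝ × ℝ) := Icc (0:ℝ) a ×ˢ Icc (0:ℝ) b with hRdef
  have hRQ : R ⊆ Q := prod_mono Icc_subset_Ici_self Icc_subset_Ici_self
  have h6 : ∫ p in Q, q' p * f p = ∫ p in R, q' p * f p := by
    apply setIntegral_eq_of_subset_of_ae_diff_eq_zero hQ.nullMeasurableSet hRQ
    refine Filter.Eventually.of_forall fun p hp => ?_
    rcases hp with ⟨hpQ, hpR⟩
    have hp1 : 0 ≤ p.1 := hpQ.1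
    have hp2 : 0 ≤ p.2 := hpQ.2
    have : a < p.1 ∨ b < p.2 := by
      by_contra hcon
      push_neg at hcon
      exact hpR ⟨⟨hp1, hcon.1⟩, ⟨hp2, hcon.2⟩⟩
    rcases this with h | h
    · have : max (a - p.1) 0 = 0 := max_eq_right (by linarith)
      simp [hfdef, this]
    · have : max (b - p.2) 0 = 0 := max_eq_right (by linarith)
      simp [hfdef, this]
  have h7 : ∫ p in R, q' p * f p = ∫ p in R, (a - p.1) * ((b - p.2) * q' p) := by
    apply setIntegral_congr_fun (measurableSet_Icc.prod measurableSet_Icc)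
    intro p hp
    have h1' : max (a - p.1) 0 = a - p.1 := max_eq_left (by linarith [hp.1.2])
    have h2' : max (b - p.2) 0 = b - p.2 := max_eq_left (by linarith [hp.2.2])
    simp only [hfdef, h1', h2']
    ring
  have hint : IntegrableOn (fun p : ℝ × ℝ => (a - p.1) * ((b - p.2) * q' p)) R volume := by
    apply ContinuousOn.integrableOn_compact (isCompact_Icc.prod isCompact_Icc)
    exact (Continuous.mul (continuous_const.sub continuous_fst)
      ((continuous_const.sub continuous_snd).mul hq'c)).continuousOn
  have h8 : ∫ p in R, (a - p.1) * ((b - p.2) * q' p)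
      = ∫ x in Icc (0:ℝ) a, ∫ y in Icc (0:ℝ) b, (a - x) * ((b - y) * q' (x, y)) := by
    rw [hRdef] at hint ⊢
    rw [Measure.volume_eq_prod] at hint ⊢
    exact setIntegral_prod _ hint
  have h9 : ∀ x : ℝ, (∫ y in Icc (0:ℝ) b, (a - x) * ((b - y) * q' (x, y)))
      = ∫ y in (0:ℝ)..b, (a - x) * ((b - y) * q' (x, y)) := by
    intro x
    rw [integral_Icc_eq_integral_Ioc, ← intervalIntegral.integral_of_le hb.le]
  have h10 : (∫ x in Icc (0:ℝ) a, ∫ y in Icc (0:ℝ) b, (a - x) * ((b - y) * q' (x, y)))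
      = ∫ x in (0:ℝ)..a, ∫ y in (0:ℝ)..b, (a - x) * ((b - y) * q' (x, y)) := by
    simp_rw [h9]
    rw [integral_Icc_eq_integral_Ioc, ← intervalIntegral.integral_of_le ha.le]
  rw [h1, h2, h5, h6, h7, h8, h10]

end BLaux

theorem breeden_litzenberger_put_put
    {Ω : Type*} [MeasureSpace Ω] [IsProbabilityMeasure (volume : Measure Ω)]
    (S₁ S₂ : Ω → ℝ) (hm : Measurable fun ω => (S₁ ω, S₂ ω))
    (hS₁ : ∀ ω, 0 ≤ S₁ ω) (hS₂ : ∀ ω, 0 ≤ S₂ ω)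
    (q : ℝ → ℝ → ℝ) (hq0 : ∀ x y, 0 ≤ q x y)
    (hqc : ContinuousOn (fun p : ℝ × ℝ => q p.1 p.2) (Set.Ici 0 ×ˢ Set.Ici 0))
    (hlaw : Measure.map (fun ω => (S₁ ω, S₂ ω)) volume
      = volume.withDensity fun p : ℝ × ℝ => ENNReal.ofReal (q p.1 p.2)) :
    ∀ k₁ k₂ : ℝ, 0 < k₁ → 0 < k₂ →
      (letI P : ℝ → ℝ → ℝ := fun k₁ k₂ => ∫ ω, max (k₁ - S₁ ω) 0 * max (k₂ - S₂ ω) 0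
       DifferentiableAt ℝ (fun t => P t k₂) k₁ ∧
       DifferentiableAt ℝ (fun t => pd1 P k₁ t) k₂ ∧
       DifferentiableAt ℝ (fun t => pd2 (pd1 P) t k₂) k₁ ∧
       DifferentiableAt ℝ (fun t => pd1 (pd2 (pd1 P)) k₁ t) k₂ ∧
       pd2 (pd1 (pd2 (pd1 P))) k₁ k₂ = q k₁ k₂) := by
  intro k₁ k₂ hk₁ hk₂
  have hq'c : Continuous (fun p : ℝ × ℝ => q (max p.1 0) (max p.2 0)) := by
    have := hqc.comp_continuous
      (f := fun p : ℝ × ℝ => (max p.1 0, max p.2 0))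
      ((continuous_fst.max continuous_const).prodMk (continuous_snd.max continuous_const))
      (fun p => ⟨le_max_right p.1 0, le_max_right p.2 0⟩)
    exact this
  have hP : ∀ a b : ℝ, 0 < a → 0 < b →
      (∫ ω, max (a - S₁ ω) 0 * max (b - S₂ ω) 0)
        = ∫ x in (0:ℝ)..a, ∫ y in (0:ℝ)..b,
            (a - x) * ((b - y) * (fun p : ℝ × ℝ => q (max p.1 0) (max p.2 0)) (x, y)) :=
    fun a b ha hb =>
      BLaux.P_eq S₁ S₂ hm hS₁ hS₂ q hq0 hqc hlaw _ rfl hq'c ha hb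
  have h := BLaux.master hq'c
    (fun a b => ∫ ω, max (a - S₁ ω) 0 * max (b - S₂ ω) 0) hP hk₁ hk₂
  refine ⟨h.1, h.2.1, h.2.2.1, h.2.2.2.1, ?_⟩
  rw [h.2.2.2.2]
  simp only [max_eq_left hk₁.le, max_eq_left hk₂.le]
end

section
/- Let q : ℝ≥0² → ℝ≥0 be continuous and define F(k₁,k₂) = ∫_0^{k₂} ∫_0^{k₁} (k₁-x)(k₂-y) q(x,y) dx dy for k₁,k₂ > 0. Then ∂²F/∂k₁∂k₂ (k₁,k₂) = ∫_0^{k₂} ∫_0^{k₁} q(x,y) dx dy, i.e., the second mixed strike derivative of the put-put price equals the cumulative distribution function Q(S₁ ≤ k₁, S₂ ≤ k₂). -/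
open MeasureTheory Set intervalIntegral


lemma swap_cont (f : ℝ → ℝ → ℝ) (hf : Continuous (Function.uncurry f))
    {b d : ℝ} (hb : 0 ≤ b) (hd : 0 ≤ d) :
    (∫ x in (0:ℝ)..b, ∫ y in (0:ℝ)..d, f x y) = ∫ y in (0:ℝ)..d, ∫ x in (0:ℝ)..b, f x y := by
  rw [intervalIntegral.integral_of_le hb, intervalIntegral.integral_of_le hd]
  simp_rw [intervalIntegral.integral_of_le hd, intervalIntegral.integral_of_le hb]
  have hint : Integrable (Function.uncurry f)
      ((volume.restrict (Ioc (0:ℝ) b)).prod (volume.restrict (Ioc (0:ℝ) d))) := by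
    rw [Measure.prod_restrict, ← Measure.volume_eq_prod]
    exact (hf.continuousOn.integrableOn_compact (isCompact_Icc.prod isCompact_Icc)).mono_set
      (Set.prod_mono Set.Ioc_subset_Icc_self Set.Ioc_subset_Icc_self)
  exact MeasureTheory.integral_integral_swap hint

lemma deriv_key (g : ℝ → ℝ) (hg : Continuous g) (a : ℝ) :
    HasDerivAt (fun t => ∫ x in (0:ℝ)..t, (t - x) * g x) (∫ x in (0:ℝ)..a, g x) a := by
  have heq : ∀ t, (∫ x in (0:ℝ)..t, (t - x) * g x)
      = t * (∫ x in (0:ℝ)..t, g x) - ∫ x in (0:ℝ)..t, x * g x := by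
    intro t
    have h1 : ∀ x, (t - x) * g x = t * g x - x * g x := fun x => by ring
    simp_rw [h1]
    rw [intervalIntegral.integral_sub ((show Continuous fun x => t * g x from continuous_const.mul hg).intervalIntegrable 0 t)
      ((show Continuous fun x : ℝ => x * g x from continuous_id'.mul hg).intervalIntegrable 0 t), intervalIntegral.integral_const_mul]
  have h1 : HasDerivAt (fun t => ∫ x in (0:ℝ)..t, g x) (g a) a :=
    (hg.integral_hasStrictDerivAt 0 a).hasDerivAt
  have h2 : HasDerivAt (fun t => ∫ x in (0:ℝ)..t, x * g x) (a * g a) a :=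
    (((continuous_id'.mul hg : Continuous fun x : ℝ => x * g x)).integral_hasStrictDerivAt 0 a).hasDerivAt
  have h3 : HasDerivAt (fun t => t * (∫ x in (0:ℝ)..t, g x) - ∫ x in (0:ℝ)..t, x * g x)
      (∫ x in (0:ℝ)..a, g x) a := by
    have := ((hasDerivAt_id a).mul h1).sub h2
    refine this.congr_deriv ?_
    simp
  exact h3.congr_of_eventuallyEq (Filter.Eventually.of_forall heq)


theorem put_put_price_second_derivative_is_cdf
    (q : ℝ → ℝ → ℝ) (hq0 : ∀ x y, 0 ≤ x → 0 ≤ y → 0 ≤ q x y)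
    (hqc : ContinuousOn (fun p : ℝ × ℝ => q p.1 p.2) (Set.Ici 0 ×ˢ Set.Ici 0))
    (F : ℝ → ℝ → ℝ)
    (hF : ∀ k₁ k₂ : ℝ, F k₁ k₂ = ∫ y in (0:ℝ)..k₂, ∫ x in (0:ℝ)..k₁, (k₁ - x) * (k₂ - y) * q x y) :
    ∀ k₁ k₂ : ℝ, 0 < k₁ → 0 < k₂ →
      pd2 (pd1 F) k₁ k₂ = ∫ y in (0:ℝ)..k₂, ∫ x in (0:ℝ)..k₁, q x y := by
  intro k₁ k₂ hk₁ hk₂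
  set Qf : ℝ → ℝ → ℝ := fun x y => q (max x 0) (max y 0) with hQfdef
  have hQc : Continuous (Function.uncurry Qf) := by
    have : Continuous fun p : ℝ × ℝ => ((max p.1 0, max p.2 0) : ℝ × ℝ) :=
      (continuous_fst.max continuous_const).prodMk (continuous_snd.max continuous_const)
    exact hqc.comp_continuous this fun p => ⟨le_max_right p.1 0, le_max_right p.2 0⟩
  have hQq : ∀ x y : ℝ, 0 ≤ x → 0 ≤ y → Qf x y = q x y := by
    intro x y hx hy; simp only [hQfdef, max_eq_left hx, max_eq_left hy]
  -- g s x = inner integral in y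
  set g : ℝ → ℝ → ℝ := fun s x => ∫ y in (0:ℝ)..s, (s - y) * Qf x y with hgdef
  have hgcont : ∀ s, Continuous (g s) := by
    intro s
    exact intervalIntegral.continuous_parametric_intervalIntegral_of_continuous'
      (f := fun x y => (s - y) * Qf x y)
      (by exact (continuous_const.sub continuous_snd).mul hQc) 0 s
  -- h y = inner integral in x
  set h : ℝ → ℝ := fun y => ∫ x in (0:ℝ)..k₁, Qf x y with hhdef
  have hhcont : Continuous h := by
    exact intervalIntegral.continuous_parametric_intervalIntegral_of_continuous'
      (f := fun y x => Qf x y)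
      (by exact hQc.comp ((continuous_snd.prodMk continuous_fst))) 0 k₁
  -- Step 1: for s > 0, pd1 F k₁ s = ∫ x in 0..k₁, g s x
  have step1 : ∀ s : ℝ, 0 < s → pd1 F k₁ s = ∫ x in (0:ℝ)..k₁, g s x := by
    intro s hs
    have hFG : ∀ t : ℝ, 0 < t → F t s = ∫ x in (0:ℝ)..t, (t - x) * g s x := by
      intro t ht
      rw [hF]
      have e1 : (∫ y in (0:ℝ)..s, ∫ x in (0:ℝ)..t, (t - x) * (s - y) * q x y)
          = ∫ y in (0:ℝ)..s, ∫ x in (0:ℝ)..t, (t - x) * (s - y) * Qf x y := by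
        apply intervalIntegral.integral_congr
        intro y hy
        rw [uIcc_of_le hs.le] at hy
        apply intervalIntegral.integral_congr
        intro x hx
        rw [uIcc_of_le ht.le] at hx
        dsimp only
        rw [hQq x y hx.1 hy.1]
      rw [e1, (swap_cont (fun x y => (t - x) * (s - y) * Qf x y)
        (by exact ((continuous_const.sub continuous_fst).mul
          (continuous_const.sub continuous_snd)).mul hQc) ht.le hs.le).symm]
      apply intervalIntegral.integral_congr
      intro x _
      simp only [hgdef]
      rw [← intervalIntegral.integral_const_mul]
      apply intervalIntegral.integral_congr
      intro y _
      ring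
    have hev : (fun t => F t s) =ᶠ[nhds k₁] (fun t => ∫ x in (0:ℝ)..t, (t - x) * g s x) := by
      filter_upwards [isOpen_Ioi.mem_nhds hk₁] with t ht using hFG t ht
    have hd : HasDerivAt (fun t => F t s) (∫ x in (0:ℝ)..k₁, g s x) k₁ :=
      (deriv_key (g s) (hgcont s) k₁).congr_of_eventuallyEq hev
    exact hd.deriv
  -- Step 2: for s > 0, ∫ x in 0..k₁, g s x = ∫ y in 0..s, (s - y) * h y
  have step2 : ∀ s : ℝ, 0 < s →
      (∫ x in (0:ℝ)..k₁, g s x) = ∫ y in (0:ℝ)..s, (s - y) * h y := by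
    intro s hs
    rw [show (∫ x in (0:ℝ)..k₁, g s x)
        = ∫ x in (0:ℝ)..k₁, ∫ y in (0:ℝ)..s, (s - y) * Qf x y from rfl,
      swap_cont (fun x y => (s - y) * Qf x y)
        (by exact (continuous_const.sub continuous_snd).mul hQc) hk₁.le hs.le]
    apply intervalIntegral.integral_congr
    intro y _
    simp only [hhdef]
    rw [← intervalIntegral.integral_const_mul]
  -- Final differentiation in s
  have hev2 : (fun s => pd1 F k₁ s) =ᶠ[nhds k₂]
      (fun s => ∫ y in (0:ℝ)..s, (s - y) * h y) := by
    filter_upwards [isOpen_Ioi.mem_nhds hk₂] with s hs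
    rw [step1 s hs, step2 s hs]
  have hd2 : HasDerivAt (fun s => pd1 F k₁ s) (∫ y in (0:ℝ)..k₂, h y) k₂ :=
    (deriv_key h hhcont k₂).congr_of_eventuallyEq hev2
  have : pd2 (pd1 F) k₁ k₂ = ∫ y in (0:ℝ)..k₂, h y := hd2.deriv
  rw [this]
  apply intervalIntegral.integral_congr
  intro y hy
  rw [uIcc_of_le hk₂.le] at hy
  simp only [hhdef]
  apply intervalIntegral.integral_congr
  intro x hx
  rw [uIcc_of_le hk₁.le] at hx
  exact hQq x y hx.1 hy.1
end

section
/- Under the assumptions of the previous item (continuous joint density q, continuous marginals, finite first and mixed moments, continuity of partial moment integrals), define M(k₁,k₂) = E[(k₁-S₁)_+·(S₂-k₂)_+]. Then for all k₁,k₂ > 0, ∂⁴M/∂k₁∂k₂∂k₁∂k₂ (k₁,k₂) = q(k₁,k₂). -/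
open MeasureTheory Set

lemma lip_max_mul (s c : ℝ) :
    LipschitzWith (Real.nnabs c) (fun x : ℝ => max (x - s) 0 * c) := by
  apply LipschitzWith.of_dist_le_mul
  intro x y
  simp only [Real.dist_eq, Real.coe_nnabs]
  calc |max (x - s) 0 * c - max (y - s) 0 * c| = |max (x - s) 0 - max (y - s) 0| * |c| := by
        rw [← sub_mul, abs_mul]
    _ ≤ |(x - s) - (y - s)| * |c| := by
        exact mul_le_mul_of_nonneg_right (abs_max_sub_max_le_abs _ _ _) (abs_nonneg c)
    _ = |c| * |x - y| := by rw [sub_sub_sub_cancel_right, mul_comm]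

lemma lip_max_left (cv : ℝ) : LipschitzWith 1 (fun s : ℝ => max (cv - s) 0) := by
  apply LipschitzWith.of_dist_le_mul
  intro x y
  simp only [Real.dist_eq, NNReal.coe_one, one_mul]
  calc |max (cv - x) 0 - max (cv - y) 0| ≤ |(cv - x) - (cv - y)| :=
        abs_max_sub_max_le_abs _ _ _
    _ = |x - y| := by rw [sub_sub_sub_cancel_left, abs_sub_comm]

lemma hasDerivAt_max_right (s c a : ℝ) (h : s < a) :
    HasDerivAt (fun x : ℝ => max (x - s) 0 * c) c a := by
  have h1 : HasDerivAt (fun x : ℝ => (x - s) * c) c a := by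
    simpa using ((hasDerivAt_id a).sub_const s).mul_const c
  refine h1.congr_of_eventuallyEq ?_
  filter_upwards [eventually_gt_nhds h] with x hx
  rw [max_eq_left (by linarith)]

lemma hasDerivAt_max_right0 (s c a : ℝ) (h : a < s) :
    HasDerivAt (fun x : ℝ => max (x - s) 0 * c) 0 a := by
  refine (hasDerivAt_const a 0).congr_of_eventuallyEq ?_
  filter_upwards [eventually_lt_nhds h] with x hx
  rw [max_eq_right (by linarith), zero_mul]

lemma hasDerivAt_max_left (cv b : ℝ) (h : b < cv) :
    HasDerivAt (fun s : ℝ => max (cv - s) 0) (-1) b := by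
  have h1 : HasDerivAt (fun s : ℝ => cv - s) (-1) b := by
    simpa using (hasDerivAt_id b).const_sub cv
  refine h1.congr_of_eventuallyEq ?_
  filter_upwards [eventually_lt_nhds h] with x hx
  rw [max_eq_left (by linarith)]

lemma hasDerivAt_max_left0 (cv b : ℝ) (h : cv < b) :
    HasDerivAt (fun s : ℝ => max (cv - s) 0) 0 b := by
  refine (hasDerivAt_const b 0).congr_of_eventuallyEq ?_
  filter_upwards [eventually_gt_nhds h] with x hx
  rw [max_eq_right (by linarith)]

theorem breeden_litzenberger_put_call
    {Ω : Type*} [MeasureSpace Ω] [IsProbabilityMeasure (volume : Measure Ω)]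
    (S₁ S₂ : Ω → ℝ) (hm : Measurable fun ω => (S₁ ω, S₂ ω))
    (hS₁ : ∀ ω, 0 ≤ S₁ ω) (hS₂ : ∀ ω, 0 ≤ S₂ ω)
    (q : ℝ → ℝ → ℝ) (hq0 : ∀ x y, 0 ≤ q x y)
    (hqc : ContinuousOn (fun p : ℝ × ℝ => q p.1 p.2) (Set.Ici 0 ×ˢ Set.Ici 0))
    (hlaw : Measure.map (fun ω => (S₁ ω, S₂ ω)) volume
      = volume.withDensity fun p : ℝ × ℝ => ENNReal.ofReal (q p.1 p.2))
    (q₁ q₂ : ℝ → ℝ)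
    (hq₁c : ContinuousOn q₁ (Set.Ici 0)) (hq₂c : ContinuousOn q₂ (Set.Ici 0))
    (hlaw₁ : Measure.map S₁ volume = volume.withDensity fun x => ENNReal.ofReal (q₁ x))
    (hlaw₂ : Measure.map S₂ volume = volume.withDensity fun y => ENNReal.ofReal (q₂ y))
    (hmom₁ : Integrable S₁) (hmom₂ : Integrable S₂)
    (hmom₁₂ : Integrable fun ω => S₁ ω * S₂ ω)
    (hpm₁ : ContinuousOn (fun y => ∫ x in Set.Ioi (0:ℝ), x * q x y) (Set.Ici 0))
    (hpm₂ : ContinuousOn (fun x => ∫ y in Set.Ioi (0:ℝ), y * q x y) (Set.Ici 0)) :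
    ∀ k₁ k₂ : ℝ, 0 < k₁ → 0 < k₂ →
      (letI M : ℝ → ℝ → ℝ := fun k₁ k₂ => ∫ ω, max (k₁ - S₁ ω) 0 * max (S₂ ω - k₂) 0
       pd2 (pd1 (pd2 (pd1 M))) k₁ k₂ = q k₁ k₂) := by
  intro k₁ k₂ hk₁ hk₂
  set M : ℝ → ℝ → ℝ := fun a b => ∫ ω, max (a - S₁ ω) 0 * max (S₂ ω - b) 0 with hMdef
  show pd2 (pd1 (pd2 (pd1 M))) k₁ k₂ = q k₁ k₂
  -- basic measurability
  have hS₁m : Measurable S₁ := measurable_fst.comp hm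
  have hS₂m : Measurable S₂ := measurable_snd.comp hm
  -- no atoms for S₁ and S₂
  have hatom : ∀ (S : Ω → ℝ) (qm : ℝ → ℝ), Measurable S →
      Measure.map S volume = volume.withDensity (fun x => ENNReal.ofReal (qm x)) →
      ∀ c : ℝ, (volume : Measure Ω) {ω | S ω = c} = 0 := by
    intro S qm hSm hl c
    have h1 : (volume : Measure Ω) {ω | S ω = c} = Measure.map S volume {c} := by
      rw [Measure.map_apply hSm (measurableSet_singleton c)]
      rfl
    rw [h1, hl, withDensity_apply _ (measurableSet_singleton c),
      Measure.restrict_eq_zero.mpr (by simp), lintegral_zero_measure]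
  have hatom1 : ∀ c : ℝ, (volume : Measure Ω) {ω | S₁ ω = c} = 0 := hatom S₁ q₁ hS₁m hlaw₁
  have hatom2 : ∀ c : ℝ, (volume : Measure Ω) {ω | S₂ ω = c} = 0 := hatom S₂ q₂ hS₂m hlaw₂
  -- Step 1 : first derivative
  have hmax2_int : ∀ b : ℝ, Integrable (fun ω => max (S₂ ω - b) 0) (volume : Measure Ω) := by
    intro b
    refine Integrable.mono (hmom₂.abs.add (integrable_const |b|)) ?_ ?_
    · exact ((hS₂m.sub measurable_const).max measurable_const).aestronglyMeasurable
    · filter_upwards with ω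
      have h1 : max (S₂ ω - b) 0 ≤ |S₂ ω| + |b| := by
        apply max_le _ (by positivity)
        have := le_abs_self (S₂ ω); have := neg_abs_le b; linarith
      rw [Real.norm_eq_abs, abs_of_nonneg (le_max_right _ _), Real.norm_eq_abs]
      exact h1.trans (le_abs_self _)
  have hmax2_le : ∀ b : ℝ, ∀ ω, max (S₂ ω - b) 0 ≤ |S₂ ω| + |b| := by
    intro b ω
    apply max_le _ (by positivity)
    have := le_abs_self (S₂ ω); have := neg_abs_le b; linarith
  have step1 : ∀ a b : ℝ, HasDerivAt (fun t => M t b)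
      (∫ ω, if S₁ ω < a then max (S₂ ω - b) 0 else 0) a := by
    intro a b
    have hae : ∀ᵐ ω : Ω, S₁ ω ≠ a := by rw [ae_iff]; simpa using hatom1 a
    have key := hasDerivAt_integral_of_dominated_loc_of_lip
      (F := fun t ω => max (t - S₁ ω) 0 * max (S₂ ω - b) 0)
      (F' := fun ω => if S₁ ω < a then max (S₂ ω - b) 0 else 0)
      (bound := fun ω => max (S₂ ω - b) 0) (x₀ := a) (μ := volume) (Metric.ball_mem_nhds _ one_pos)
      (Filter.Eventually.of_forall fun x =>
        (((measurable_const.sub hS₁m).max measurable_const).mul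
          ((hS₂m.sub measurable_const).max measurable_const)).aestronglyMeasurable)
      ?_
      ((Measurable.ite (measurableSet_lt hS₁m measurable_const)
        ((hS₂m.sub measurable_const).max measurable_const) measurable_const).aestronglyMeasurable)
      (Filter.Eventually.of_forall fun ω => (lip_max_mul (S₁ ω) _).lipschitzOnWith)
      (hmax2_int b) ?_
    · exact key.2
    · -- integrability of F a
      refine Integrable.mono (((hmom₂.abs.add (integrable_const |b|)).const_mul |a|)) ?_ ?_
      · exact (((measurable_const.sub hS₁m).max measurable_const).mul
          ((hS₂m.sub measurable_const).max measurable_const)).aestronglyMeasurable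
      · filter_upwards with ω
        have h1 : max (a - S₁ ω) 0 ≤ |a| := by
          apply max_le _ (abs_nonneg a)
          have := hS₁ ω; have := le_abs_self a; linarith
        have hp : (0:ℝ) ≤ max (a - S₁ ω) 0 * max (S₂ ω - b) 0 :=
          mul_nonneg (le_max_right _ _) (le_max_right _ _)
        rw [Real.norm_eq_abs, abs_of_nonneg hp, Real.norm_eq_abs]
        refine le_trans ?_ (le_abs_self _)
        exact mul_le_mul h1 (hmax2_le b ω) (le_max_right _ _) (abs_nonneg a)
    · -- a.e. differentiability
      filter_upwards [hae] with ω hω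
      rcases lt_or_gt_of_ne hω with h | h
      · simp only [if_pos h]
        exact hasDerivAt_max_right (S₁ ω) _ a h
      · simp only [if_neg (not_lt.mpr h.le)]
        exact hasDerivAt_max_right0 (S₁ ω) _ a h
  set N : ℝ → ℝ → ℝ := fun a b => ∫ ω, if S₁ ω < a then max (S₂ ω - b) 0 else 0 with hNdef
  have hpd1 : pd1 M = N := funext fun a => funext fun b => (step1 a b).deriv
  -- Step 2 : second derivative
  have step2 : ∀ a b : ℝ, HasDerivAt (fun s => N a s)
      (∫ ω, if S₁ ω < a ∧ b < S₂ ω then (-1 : ℝ) else 0) b := by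
    intro a b
    have hae : ∀ᵐ ω : Ω, S₂ ω ≠ b := by rw [ae_iff]; simpa using hatom2 b
    have key := hasDerivAt_integral_of_dominated_loc_of_lip
      (F := fun s ω => if S₁ ω < a then max (S₂ ω - s) 0 else 0)
      (F' := fun ω => if S₁ ω < a ∧ b < S₂ ω then (-1 : ℝ) else 0)
      (bound := fun _ => (1:ℝ)) (x₀ := b) (μ := volume) (Metric.ball_mem_nhds _ one_pos)
      (Filter.Eventually.of_forall fun s =>
        (Measurable.ite (measurableSet_lt hS₁m measurable_const)
          ((hS₂m.sub measurable_const).max measurable_const) measurable_const).aestronglyMeasurable)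
      ?_
      ((Measurable.ite ((measurableSet_lt hS₁m measurable_const).inter
          (measurableSet_lt measurable_const hS₂m)) measurable_const
          measurable_const).aestronglyMeasurable)
      ?_ (integrable_const 1) ?_
    · exact key.2
    · -- integrability at b
      refine Integrable.mono (hmax2_int b) ?_ ?_
      · exact (Measurable.ite (measurableSet_lt hS₁m measurable_const)
          ((hS₂m.sub measurable_const).max measurable_const) measurable_const).aestronglyMeasurable
      · filter_upwards with ω
        by_cases h : S₁ ω < a
        · rw [if_pos h]
        · rw [if_neg h, norm_zero]
          exact norm_nonneg _
    · -- Lipschitz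
      refine Filter.Eventually.of_forall fun ω => ?_
      have h1 : Real.nnabs (1:ℝ) = 1 := by simp
      rw [h1]
      by_cases h : S₁ ω < a
      · simp only [if_pos h]
        exact (lip_max_left (S₂ ω)).lipschitzOnWith
      · simp only [if_neg h]
        exact (LipschitzWith.const' 0).lipschitzOnWith
    · -- a.e. differentiability
      filter_upwards [hae] with ω hω
      by_cases h : S₁ ω < a
      · simp only [if_pos h]
        rcases lt_or_gt_of_ne hω with h2 | h2
        · rw [if_neg (fun hc : S₁ ω < a ∧ b < S₂ ω => absurd hc.2 (not_lt.mpr h2.le))]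
          exact hasDerivAt_max_left0 (S₂ ω) b h2
        · rw [if_pos ⟨h, h2⟩]
          exact hasDerivAt_max_left (S₂ ω) b h2
      · rw [if_neg (fun hc : S₁ ω < a ∧ b < S₂ ω => h hc.1)]
        have : (fun s : ℝ => if S₁ ω < a then max (S₂ ω - s) 0 else 0) = fun _ => (0:ℝ) := by
          funext s; rw [if_neg h]
        rw [this]
        exact hasDerivAt_const b (0:ℝ)
  -- the truncated density
  set Q2 : ℝ × ℝ → ℝ := (Set.Ici 0 ×ˢ Set.Ici 0).indicator (fun p => q p.1 p.2) with hQ2def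
  have hQ2nn : ∀ p, 0 ≤ Q2 p := fun p => Set.indicator_nonneg (fun p _ => hq0 p.1 p.2) p
  have hQ : MeasurableSet (Set.Ici (0:ℝ) ×ˢ Set.Ici (0:ℝ)) :=
    measurableSet_Ici.prod measurableSet_Ici
  have hQ2meas : AEMeasurable Q2 (volume : Measure (ℝ × ℝ)) := by
    rw [hQ2def, aemeasurable_indicator_iff hQ]
    exact hqc.aemeasurable hQ
  -- the law equals the density given by Q2
  have hpre0 : ∀ s : Set (ℝ × ℝ), MeasurableSet s → Disjoint s (Set.Ici 0 ×ˢ Set.Ici 0) →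
      Measure.map (fun ω => (S₁ ω, S₂ ω)) volume s = 0 := by
    intro s hs hdisj
    rw [Measure.map_apply hm hs]
    have he : (fun ω => (S₁ ω, S₂ ω)) ⁻¹' s = ∅ := by
      apply Set.eq_empty_iff_forall_notMem.mpr
      intro ω hω
      exact Set.disjoint_left.mp hdisj hω (Set.mk_mem_prod (hS₁ ω) (hS₂ ω))
    rw [he, measure_empty]
  have hlaw' : Measure.map (fun ω => (S₁ ω, S₂ ω)) volume
      = volume.withDensity (fun p => ENNReal.ofReal (Q2 p)) := by
    refine Measure.ext fun s hs => ?_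
    have hmi : MeasurableSet (s ∩ (Set.Ici 0 ×ˢ Set.Ici 0)) := hs.inter hQ
    have hmd : MeasurableSet (s \ (Set.Ici 0 ×ˢ Set.Ici 0)) := hs.diff hQ
    have hql : ∫⁻ p in s ∩ (Set.Ici 0 ×ˢ Set.Ici 0), ENNReal.ofReal (q p.1 p.2)
        = ∫⁻ p in s ∩ (Set.Ici 0 ×ˢ Set.Ici 0), ENNReal.ofReal (Q2 p) := by
      refine lintegral_congr_ae ?_
      filter_upwards [ae_restrict_mem hmi] with p hp
      rw [hQ2def, Set.indicator_of_mem hp.2]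
    have hd0 : ∫⁻ p in s \ (Set.Ici 0 ×ˢ Set.Ici 0), ENNReal.ofReal (Q2 p) = 0 := by
      have hz : ∀ᵐ p ∂(volume.restrict (s \ (Set.Ici 0 ×ˢ Set.Ici 0))),
          ENNReal.ofReal (Q2 p) = 0 := by
        filter_upwards [ae_restrict_mem hmd] with p hp
        rw [hQ2def, Set.indicator_of_notMem hp.2, ENNReal.ofReal_zero]
      rw [lintegral_congr_ae hz, lintegral_zero]
    have h2 : Measure.map (fun ω => (S₁ ω, S₂ ω)) volume (s \ (Set.Ici 0 ×ˢ Set.Ici 0)) = 0 :=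
      hpre0 _ hmd disjoint_sdiff_left
    have h3 : Measure.map (fun ω => (S₁ ω, S₂ ω)) volume (s ∩ (Set.Ici 0 ×ˢ Set.Ici 0))
        = ∫⁻ p in s ∩ (Set.Ici 0 ×ˢ Set.Ici 0), ENNReal.ofReal (Q2 p) := by
      rw [hlaw, withDensity_apply _ hmi, hql]
    calc Measure.map (fun ω => (S₁ ω, S₂ ω)) volume s
        = Measure.map (fun ω => (S₁ ω, S₂ ω)) volume (s ∩ (Set.Ici 0 ×ˢ Set.Ici 0))
          + Measure.map (fun ω => (S₁ ω, S₂ ω)) volume (s \ (Set.Ici 0 ×ˢ Set.Ici 0)) :=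
          (measure_inter_add_diff s hQ).symm
      _ = (∫⁻ p in s ∩ (Set.Ici 0 ×ˢ Set.Ici 0), ENNReal.ofReal (Q2 p))
          + ∫⁻ p in s \ (Set.Ici 0 ×ˢ Set.Ici 0), ENNReal.ofReal (Q2 p) := by
          rw [h2, h3, hd0]
      _ = volume.withDensity (fun p => ENNReal.ofReal (Q2 p)) s := by
          rw [← withDensity_apply _ hmi, ← withDensity_apply _ hmd,
            measure_inter_add_diff s hQ]
  have hQ2int : Integrable Q2 (volume : Measure (ℝ × ℝ)) := by
    refine ⟨hQ2meas.aestronglyMeasurable, ?_⟩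
    rw [hasFiniteIntegral_iff_ofReal (Filter.Eventually.of_forall hQ2nn)]
    have h1 : ∫⁻ p, ENNReal.ofReal (Q2 p)
        = Measure.map (fun ω => (S₁ ω, S₂ ω)) volume Set.univ := by
      rw [hlaw', withDensity_apply _ MeasurableSet.univ, Measure.restrict_univ]
    rw [h1, Measure.map_apply hm MeasurableSet.univ, Set.preimage_univ, measure_univ]
    exact ENNReal.one_lt_top
  -- pointwise values of Q2 on the positive quadrant
  have hQ2eq : ∀ x y : ℝ, 0 ≤ x → 0 ≤ y → Q2 (x, y) = q x y := fun x y hx hy =>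
    Set.indicator_of_mem (Set.mk_mem_prod hx hy) _
  -- continuity of sections
  have hsec_cont : ∀ x : ℝ, 0 ≤ x → ContinuousOn (fun y => q x y) (Set.Ici 0) := by
    intro x hx
    exact hqc.comp (Continuous.prodMk_right x).continuousOn (fun y hy => Set.mk_mem_prod hx hy)
  have hsec_cont' : ∀ y : ℝ, 0 < y → ∀ x : ℝ, 0 < x → ContinuousAt (fun t => q t y) x := by
    intro y hy x hx
    have hmem : (Set.Ici 0 ×ˢ Set.Ici 0 : Set (ℝ × ℝ)) ∈ nhds (x, y) := by
      have : Set.Ioi (0:ℝ) ×ˢ Set.Ioi (0:ℝ) ∈ nhds (x, y) :=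
        (isOpen_Ioi.prod isOpen_Ioi).mem_nhds (Set.mk_mem_prod hx hy)
      exact Filter.mem_of_superset this
        (Set.prod_mono Set.Ioi_subset_Ici_self Set.Ioi_subset_Ici_self)
    have hc : ContinuousAt (fun p : ℝ × ℝ => q p.1 p.2) (x, y) :=
      (hqc.continuousAt hmem)
    have hg : ContinuousAt (fun t : ℝ => ((t, y) : ℝ × ℝ)) x :=
      (continuous_id.prodMk continuous_const).continuousAt
    have h3 := ContinuousAt.comp (g := fun p : ℝ × ℝ => q p.1 p.2)
      (f := fun t : ℝ => ((t, y) : ℝ × ℝ)) (x := x) hc hg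
    exact h3
  -- slice measurability
  have hslice_meas : ∀ x : ℝ, 0 ≤ x → AEMeasurable (fun y => Q2 (x, y)) (volume : Measure ℝ) := by
    intro x hx
    have h1 : (fun y => Q2 (x, y)) = (Set.Ici 0).indicator (fun y => q x y) := by
      funext y
      by_cases hy : y ∈ Set.Ici (0:ℝ)
      · rw [Set.indicator_of_mem hy, hQ2eq x y hx hy]
      · rw [Set.indicator_of_notMem hy, hQ2def, Set.indicator_of_notMem (fun hc => hy hc.2)]
    rw [h1, aemeasurable_indicator_iff measurableSet_Ici]
    exact (hsec_cont x hx).aemeasurable measurableSet_Ici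
  -- slice integrability of y * Q2 (x,y)  (uses hpm₂ and hmom₁₂)
  set L : ℝ → ENNReal := fun x => ∫⁻ y in Set.Ioi 0, ENNReal.ofReal (y * Q2 (x, y)) with hLdef
  have hF_eq : ∀ x : ℝ, 0 < x →
      (∫ y in Set.Ioi (0:ℝ), y * q x y) = (L x).toReal := by
    intro x hx
    have h1 : (∫ y in Set.Ioi (0:ℝ), y * q x y) = ∫ y in Set.Ioi (0:ℝ), y * Q2 (x, y) := by
      refine setIntegral_congr_fun measurableSet_Ioi fun y hy => ?_
      rw [hQ2eq x y hx.le (le_of_lt hy)]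
    rw [h1]
    refine integral_eq_lintegral_of_nonneg_ae ?_ ?_
    · filter_upwards [ae_restrict_mem measurableSet_Ioi] with y hy
      exact mul_nonneg (le_of_lt hy) (hQ2nn _)
    · exact ((aemeasurable_id.mul (hslice_meas x hx.le)).restrict).aestronglyMeasurable
  have hLfin_ae : ∀ᵐ x : ℝ, 0 < x → L x < ⊤ := by
    -- total double integral is finite thanks to hmom₁₂
    have h0 : (∫⁻ ω, ENNReal.ofReal (S₁ ω * S₂ ω)) < ⊤ := by
      refine lt_of_le_of_lt (lintegral_mono fun ω => Real.ofReal_le_enorm _) ?_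
      exact hmom₁₂.2
    have h1 : (∫⁻ ω, ENNReal.ofReal (S₁ ω * S₂ ω))
        = ∫⁻ p : ℝ × ℝ, ENNReal.ofReal (Q2 p) * ENNReal.ofReal (p.1 * p.2) := by
      have e1 : (∫⁻ ω, ENNReal.ofReal (S₁ ω * S₂ ω))
          = ∫⁻ p : ℝ × ℝ, ENNReal.ofReal (p.1 * p.2)
              ∂(Measure.map (fun ω => (S₁ ω, S₂ ω)) volume) := by
        rw [lintegral_map' (f := fun p : ℝ × ℝ => ENNReal.ofReal (p.1 * p.2)) ((measurable_fst.mul measurable_snd).ennreal_ofReal).aemeasurable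
          hm.aemeasurable]
      rw [e1, hlaw']
      exact lintegral_withDensity_eq_lintegral_mul₀ hQ2meas.ennreal_ofReal
        ((measurable_fst.mul measurable_snd).ennreal_ofReal).aemeasurable
    have hprodmeas : AEMeasurable (fun p : ℝ × ℝ =>
        ENNReal.ofReal (Q2 p) * ENNReal.ofReal (p.1 * p.2))
        ((volume : Measure ℝ).prod volume) := by
      rw [← Measure.volume_eq_prod]
      exact hQ2meas.ennreal_ofReal.mul
        ((measurable_fst.mul measurable_snd).ennreal_ofReal).aemeasurable
    have h2 : (∫⁻ x : ℝ, ∫⁻ y : ℝ, ENNReal.ofReal (Q2 (x, y)) * ENNReal.ofReal (x * y)) < ⊤ := by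
      have := (lintegral_prod _ hprodmeas).symm
      calc (∫⁻ x : ℝ, ∫⁻ y : ℝ, ENNReal.ofReal (Q2 (x, y)) * ENNReal.ofReal (x * y))
          = ∫⁻ p : ℝ × ℝ, ENNReal.ofReal (Q2 p) * ENNReal.ofReal (p.1 * p.2)
            ∂((volume : Measure ℝ).prod volume) := this
        _ = ∫⁻ ω, ENNReal.ofReal (S₁ ω * S₂ ω) := by rw [← Measure.volume_eq_prod, ← h1]
        _ < ⊤ := h0
    -- a.e. finiteness of the inner integral
    have hinner_meas : AEMeasurable
        (fun x => ∫⁻ y : ℝ, ENNReal.ofReal (Q2 (x, y)) * ENNReal.ofReal (x * y)) volume := by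
      obtain ⟨G, hGmeas, hGe⟩ := hprodmeas
      have hae_slice := Measure.ae_ae_of_ae_prod hGe
      refine ((Measurable.lintegral_prod_right' (ν := (volume : Measure ℝ)) hGmeas).aemeasurable).congr ?_
      filter_upwards [hae_slice] with x hx
      exact (lintegral_congr_ae hx).symm
    have h3 : ∀ᵐ x : ℝ, (∫⁻ y : ℝ, ENNReal.ofReal (Q2 (x, y)) * ENNReal.ofReal (x * y)) < ⊤ :=
      ae_lt_top' hinner_meas h2.ne
    filter_upwards [h3] with x hx hxpos
    have key : ENNReal.ofReal x * L x
        ≤ ∫⁻ y : ℝ, ENNReal.ofReal (Q2 (x, y)) * ENNReal.ofReal (x * y) := by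
      have e2 : ENNReal.ofReal x * L x
          = ∫⁻ y in Set.Ioi (0:ℝ), ENNReal.ofReal x * ENNReal.ofReal (y * Q2 (x, y)) := by
        rw [hLdef]
        exact (lintegral_const_mul'' _ ((aemeasurable_id.mul (hslice_meas x hxpos.le)).restrict.ennreal_ofReal)).symm
      rw [e2]
      refine le_trans (le_of_eq (lintegral_congr_ae ?_)) (setLIntegral_le_lintegral _ _)
      filter_upwards [ae_restrict_mem measurableSet_Ioi] with y hy
      rw [← ENNReal.ofReal_mul hxpos.le, ← ENNReal.ofReal_mul (hQ2nn (x, y)),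
        mul_comm (Q2 (x,y)) (x * y), mul_assoc]
    have hfin : ENNReal.ofReal x * L x < ⊤ := lt_of_le_of_lt key hx
    by_contra hLx
    rw [not_lt, top_le_iff] at hLx
    rw [hLx, ENNReal.mul_top (by simpa using ne_of_gt (ENNReal.ofReal_pos.mpr hxpos))] at hfin
    exact absurd hfin (by simp)
  have hSA : ∀ x : ℝ, 0 < x → IntegrableOn (fun y => y * Q2 (x, y)) (Set.Ioi 0) volume := by
    intro x₀ hx₀
    have hLx₀ : L x₀ < ⊤ := by
      by_contra hL
      rw [not_lt, top_le_iff] at hL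
      -- choose a sequence xₙ → x₀ with L xₙ < ⊤
      have hex : ∀ n : ℕ, ∃ t : ℝ, t ∈ Set.Ioo x₀ (x₀ + 1 / (n + 1)) ∧ L t < ⊤ := by
        intro n
        by_contra hc
        push_neg at hc
        have hsub : Set.Ioo x₀ (x₀ + 1 / (n + 1)) ⊆ {x : ℝ | ¬ (0 < x → L x < ⊤)} := by
          intro t ht
          intro hcon
          exact absurd (hcon (lt_trans hx₀ ht.1)) (by simpa using hc t ht)
        have h0 : (volume : Measure ℝ) {x : ℝ | ¬ (0 < x → L x < ⊤)} = 0 :=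
          ae_iff.mp hLfin_ae
        have h1 : (volume : Measure ℝ) (Set.Ioo x₀ (x₀ + 1 / (n + 1))) = 0 :=
          measure_mono_null hsub h0
        rw [Real.volume_Ioo] at h1
        have hpos : (0:ℝ) < 1 / (n + 1) := by positivity
        simp only [add_sub_cancel_left] at h1
        exact (ENNReal.ofReal_pos.mpr hpos).ne' h1
      choose xs hxs hxsfin using hex
      have hxs_gt : ∀ n, x₀ < xs n := fun n => (hxs n).1
      have hxs_tendsto : Filter.Tendsto xs Filter.atTop (nhds x₀) := by
        refine tendsto_of_tendsto_of_tendsto_of_le_of_le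
          (tendsto_const_nhds) ?_ (fun n => (hxs n).1.le) (fun n => (hxs n).2.le)
        have := tendsto_one_div_add_atTop_nhds_zero_nat (𝕜 := ℝ)
        have h2 := this.const_add x₀
        simpa using h2
      -- Fatou
      have hfatou : (⊤ : ENNReal) ≤ Filter.liminf (fun n => L (xs n)) Filter.atTop := by
        rw [← hL]
        simp only [hLdef]
        have hcongr : (∫⁻ y in Set.Ioi (0:ℝ), ENNReal.ofReal (y * Q2 (x₀, y)))
            = ∫⁻ y in Set.Ioi (0:ℝ),
                Filter.liminf (fun n => ENNReal.ofReal (y * Q2 (xs n, y))) Filter.atTop := by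
          refine lintegral_congr_ae ?_
          filter_upwards [ae_restrict_mem measurableSet_Ioi] with y hy
          have hq_t : Filter.Tendsto (fun n => q (xs n) y) Filter.atTop (nhds (q x₀ y)) :=
            ((hsec_cont' y hy x₀ hx₀).tendsto).comp hxs_tendsto
        
          have ht : Filter.Tendsto (fun n => ENNReal.ofReal (y * Q2 (xs n, y))) Filter.atTop
              (nhds (ENNReal.ofReal (y * Q2 (x₀, y)))) := by
            have he : ∀ n, Q2 (xs n, y) = q (xs n) y := fun n =>
              hQ2eq _ y (lt_trans hx₀ (hxs_gt n)).le (le_of_lt hy)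
            rw [hQ2eq x₀ y hx₀.le (le_of_lt hy)]
            simp only [he]
            exact ENNReal.tendsto_ofReal (hq_t.const_mul y)
          exact (ht.liminf_eq).symm
        rw [hcongr]
        refine le_trans (lintegral_liminf_le' ?_) ?_
        · intro n
          exact ((aemeasurable_id.mul (hslice_meas (xs n) (lt_trans hx₀ (hxs_gt n)).le)).restrict).ennreal_ofReal
        · exact le_refl _
      -- contradiction with continuity of the partial moment
      have hIci : Set.Ici (0:ℝ) ∈ nhds x₀ :=
        Filter.mem_of_superset (isOpen_Ioi.mem_nhds hx₀) Set.Ioi_subset_Ici_self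
      have hFcont : ContinuousAt (fun x => ∫ y in Set.Ioi (0:ℝ), y * q x y) x₀ :=
        hpm₂.continuousAt hIci
      have hFt : Filter.Tendsto (fun n => ∫ y in Set.Ioi (0:ℝ), y * q (xs n) y)
          Filter.atTop (nhds (∫ y in Set.Ioi (0:ℝ), y * q x₀ y)) :=
        (hFcont.tendsto).comp hxs_tendsto
      set C : ℝ := (∫ y in Set.Ioi (0:ℝ), y * q x₀ y) + 1 with hCdef
      have hev : ∀ᶠ n in Filter.atTop, (∫ y in Set.Ioi (0:ℝ), y * q (xs n) y) < C :=
        hFt.eventually (eventually_lt_nhds (by rw [hCdef]; linarith))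
      have hevL : ∀ᶠ n in Filter.atTop, L (xs n) ≤ ENNReal.ofReal C := by
        filter_upwards [hev] with n hn
        have he : L (xs n) = ENNReal.ofReal ((L (xs n)).toReal) :=
          (ENNReal.ofReal_toReal (hxsfin n).ne).symm
        rw [he, ← hF_eq (xs n) (lt_trans hx₀ (hxs_gt n))]
        exact ENNReal.ofReal_le_ofReal hn.le
      have hliminf_le : Filter.liminf (fun n => L (xs n)) Filter.atTop ≤ ENNReal.ofReal C := by
        refine le_trans (Filter.liminf_le_liminf hevL) ?_
        rw [Filter.liminf_const]
      exact absurd (le_trans hfatou hliminf_le) (by simp)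
    refine ⟨((aemeasurable_id.mul (hslice_meas x₀ hx₀.le)).restrict).aestronglyMeasurable, ?_⟩
    rw [hasFiniteIntegral_iff_ofReal ?_]
    · exact hLx₀
    · filter_upwards [ae_restrict_mem measurableSet_Ioi] with y hy
      exact mul_nonneg (le_of_lt hy) (hQ2nn _)
  -- slice integrability of Q2 (x, ·)
  have hSC : ∀ x : ℝ, 0 < x → ∀ b : ℝ, 0 < b →
      IntegrableOn (fun y => Q2 (x, y)) (Set.Ioi b) volume := by
    intro x hx b hb
    set T : ℝ := max b 1 with hTdef
    have hbT : b ≤ T := le_max_left _ _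
    have hT0 : (0:ℝ) < T := lt_of_lt_of_le one_pos (le_max_right _ _)
    have hi1 : IntegrableOn (fun y => Q2 (x, y)) (Set.Ioc b T) volume := by
      have hcont : ContinuousOn (fun y => q x y) (Set.Icc b T) :=
        (hsec_cont x hx.le).mono (fun y hy => le_trans hb.le hy.1)
      refine ((hcont.integrableOn_Icc).mono_set Set.Ioc_subset_Icc_self).congr_fun
        (fun y hy => ?_) measurableSet_Ioc
      exact (hQ2eq x y hx.le (le_of_lt (lt_of_le_of_lt hb.le hy.1))).symm
    have hi2 : IntegrableOn (fun y => Q2 (x, y)) (Set.Ioi T) volume := by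
      have hint2 : IntegrableOn (fun y => (1/T) * (y * Q2 (x, y))) (Set.Ioi T) volume :=
        ((hSA x hx).mono_set (Set.Ioi_subset_Ioi hT0.le)).const_mul (1/T)
      refine Integrable.mono hint2 ((hslice_meas x hx.le).restrict).aestronglyMeasurable ?_
      filter_upwards [ae_restrict_mem measurableSet_Ioi] with y hy
      have hy0 : (0:ℝ) < y := lt_trans hT0 hy
      have h2 : T * Q2 (x, y) ≤ y * Q2 (x, y) :=
        mul_le_mul_of_nonneg_right (le_of_lt hy) (hQ2nn _)
      have h3 : (0:ℝ) ≤ (1/T) * (y * Q2 (x, y)) :=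
        mul_nonneg (by positivity) (mul_nonneg hy0.le (hQ2nn _))
      rw [Real.norm_eq_abs, Real.norm_eq_abs, abs_of_nonneg (hQ2nn _), abs_of_nonneg h3]
      calc Q2 (x, y) = (1/T) * (T * Q2 (x, y)) := by field_simp
        _ ≤ (1/T) * (y * Q2 (x, y)) := mul_le_mul_of_nonneg_left h2 (by positivity)
    have hunion : Set.Ioc b T ∪ Set.Ioi T = Set.Ioi b := Set.Ioc_union_Ioi_eq_Ioi hbT
    rw [← hunion]
    exact hi1.union hi2
  set g : ℝ → ℝ → ℝ := fun b x => ∫ y in Set.Ioi b, Q2 (x, y) with hgdef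
  -- continuity of g b at positive points
  have hgcont : ∀ b : ℝ, 0 < b → ∀ x₀ : ℝ, 0 < x₀ → ContinuousAt (g b) x₀ := by
    intro b hb x₀ hx₀
    have hIci : Set.Ici (0:ℝ) ∈ nhds x₀ :=
      Filter.mem_of_superset (isOpen_Ioi.mem_nhds hx₀) Set.Ioi_subset_Ici_self
    have hpmc : ContinuousAt (fun x => ∫ y in Set.Ioi (0:ℝ), y * q x y) x₀ :=
      hpm₂.continuousAt hIci
    rw [ContinuousAt, Metric.tendsto_nhds]
    intro ε hε
    set C : ℝ := |∫ y in Set.Ioi (0:ℝ), y * q x₀ y| + 1 with hCdef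
    have hC0 : 0 < C := by positivity
    have hltC : (∫ y in Set.Ioi (0:ℝ), y * q x₀ y) < C := by
      have h := le_abs_self (∫ y in Set.Ioi (0:ℝ), y * q x₀ y)
      rw [hCdef]
      linarith
    have hevC : ∀ᶠ x in nhds x₀, (∫ y in Set.Ioi (0:ℝ), y * q x y) < C :=
      hpmc.eventually (eventually_lt_nhds hltC)
    set T : ℝ := max (3 * C / ε + 1) (b + 1) with hTdef
    have hTb : b < T := lt_of_lt_of_le (lt_add_one b) (le_max_right _ _)
    have hT0 : (0:ℝ) < T := lt_trans hb hTb
    have hCT : C / T < ε / 3 := by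
      have h1 : 3 * C / ε < T := lt_of_lt_of_le (lt_add_one _) (le_max_left _ _)
      rw [div_lt_div_iff₀ hT0 (by norm_num : (0:ℝ) < 3)]
      have h2 : 3 * C < T * ε := by
        rw [div_lt_iff₀ hε] at h1
        linarith
      linarith
    -- the tail
    have htail_le : ∀ x : ℝ, 0 < x → (∫ y in Set.Ioi (0:ℝ), y * q x y) < C →
        (∫ y in Set.Ioi T, Q2 (x, y)) < ε / 3 := by
      intro x hx hxC
      have hint1 : IntegrableOn (fun y => Q2 (x, y)) (Set.Ioi T) volume := hSC x hx T hT0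
      have hint2 : IntegrableOn (fun y => (1/T) * (y * Q2 (x, y))) (Set.Ioi T) volume :=
        ((hSA x hx).mono_set (Set.Ioi_subset_Ioi hT0.le)).const_mul (1/T)
      have h1 : (∫ y in Set.Ioi T, Q2 (x, y))
          ≤ ∫ y in Set.Ioi T, (1/T) * (y * Q2 (x, y)) := by
        refine setIntegral_mono_on hint1 hint2 measurableSet_Ioi fun y hy => ?_
        calc Q2 (x, y) = (1/T) * (T * Q2 (x, y)) := by field_simp
          _ ≤ (1/T) * (y * Q2 (x, y)) := mul_le_mul_of_nonneg_left
              (mul_le_mul_of_nonneg_right (le_of_lt hy) (hQ2nn _)) (by positivity)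
      have h3 : (∫ y in Set.Ioi T, (1/T) * (y * Q2 (x, y)))
          = (1/T) * ∫ y in Set.Ioi T, y * Q2 (x, y) := integral_const_mul _ _
      have h4 : (∫ y in Set.Ioi T, y * Q2 (x, y)) ≤ ∫ y in Set.Ioi (0:ℝ), y * Q2 (x, y) := by
        refine setIntegral_mono_set (hSA x hx) ?_ ?_
        · filter_upwards [ae_restrict_mem measurableSet_Ioi] with y hy
          exact mul_nonneg (le_of_lt hy) (hQ2nn _)
        · exact Filter.Eventually.of_forall (Set.Ioi_subset_Ioi hT0.le)
      have h5 : (∫ y in Set.Ioi (0:ℝ), y * Q2 (x, y)) = ∫ y in Set.Ioi (0:ℝ), y * q x y := by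
        refine setIntegral_congr_fun measurableSet_Ioi fun y hy => ?_
        rw [hQ2eq x y hx.le (le_of_lt hy)]
      calc (∫ y in Set.Ioi T, Q2 (x, y)) ≤ (1/T) * ∫ y in Set.Ioi T, y * Q2 (x, y) := by
            rw [← h3]; exact h1
        _ ≤ (1/T) * ∫ y in Set.Ioi (0:ℝ), y * Q2 (x, y) :=
            mul_le_mul_of_nonneg_left h4 (by positivity)
        _ < (1/T) * C := by
            rw [h5]
            exact mul_lt_mul_of_pos_left hxC (by positivity)
        _ = C / T := by ring
        _ < ε / 3 := hCT
    -- the main (compact) part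
    have htail_nn : ∀ x : ℝ, (0:ℝ) ≤ ∫ y in Set.Ioi T, Q2 (x, y) :=
      fun x => setIntegral_nonneg measurableSet_Ioi (fun y _ => hQ2nn _)
    have hmcont : ContinuousAt (fun x => ∫ y in Set.Ioc b T, Q2 (x, y)) x₀ := by
      have hK : IsCompact ((Set.Icc (x₀/2) (x₀+1)) ×ˢ (Set.Icc (0:ℝ) T)) :=
        isCompact_Icc.prod isCompact_Icc
      have hKQ : ((Set.Icc (x₀/2) (x₀+1)) ×ˢ (Set.Icc (0:ℝ) T))
          ⊆ Set.Ici 0 ×ˢ Set.Ici 0 :=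
        Set.prod_mono (fun z hz => le_trans (by positivity) hz.1) (fun z hz => hz.1)
      obtain ⟨C2, hC2⟩ := hK.exists_bound_of_continuousOn (hqc.mono hKQ)
      have hnbhd : Set.Ioo (x₀/2) (x₀+1) ∈ nhds x₀ :=
        isOpen_Ioo.mem_nhds ⟨half_lt_self hx₀, lt_add_one x₀⟩
      refine continuousAt_of_dominated (bound := fun _ => C2) ?_ ?_ ?_ ?_
      · filter_upwards [eventually_gt_nhds hx₀] with x hx
        exact ((hslice_meas x hx.le).restrict).aestronglyMeasurable
      · filter_upwards [Filter.mem_of_superset hnbhd Set.Ioo_subset_Icc_self] with x hx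
        filter_upwards [ae_restrict_mem measurableSet_Ioc] with y hy
        have hy0 : (0:ℝ) < y := lt_trans hb hy.1
        have hx0 : (0:ℝ) < x := lt_of_lt_of_le (by positivity) hx.1
        rw [Real.norm_eq_abs, hQ2eq x y hx0.le hy0.le]
        exact hC2 (x, y) (Set.mk_mem_prod hx ⟨hy0.le, hy.2⟩)
      · exact integrableOn_const measure_Ioc_lt_top.ne
      · filter_upwards [ae_restrict_mem measurableSet_Ioc] with y hy
        have hy0 : (0:ℝ) < y := lt_trans hb hy.1
        refine (hsec_cont' y hy0 x₀ hx₀).congr ?_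
        filter_upwards [eventually_gt_nhds hx₀] with x hx
        exact (hQ2eq x y hx.le hy0.le).symm
    have hm3 : ∀ᶠ x in nhds x₀,
        dist (∫ y in Set.Ioc b T, Q2 (x, y)) (∫ y in Set.Ioc b T, Q2 (x₀, y)) < ε / 3 :=
      Metric.tendsto_nhds.mp hmcont (ε/3) (by positivity)
    -- decomposition
    have hdecomp : ∀ x : ℝ, 0 < x → g b x
        = (∫ y in Set.Ioc b T, Q2 (x, y)) + ∫ y in Set.Ioi T, Q2 (x, y) := by
      intro x hx
      simp only [hgdef]
      rw [← Set.Ioc_union_Ioi_eq_Ioi hTb.le]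
      exact setIntegral_union (Set.Ioc_disjoint_Ioi le_rfl) measurableSet_Ioi
        ((hSC x hx b hb).mono_set Set.Ioc_subset_Ioi_self) (hSC x hx T hT0)
    have htailx₀ : (∫ y in Set.Ioi T, Q2 (x₀, y)) < ε / 3 := htail_le x₀ hx₀ hltC
    filter_upwards [hevC, hm3, eventually_gt_nhds hx₀] with x h1 h2 h3
    have htx : (∫ y in Set.Ioi T, Q2 (x, y)) < ε / 3 := htail_le x h3 h1
    rw [Real.dist_eq, hdecomp x h3, hdecomp x₀ hx₀]
    rw [Real.dist_eq] at h2
    have habs : |(∫ y in Set.Ioi T, Q2 (x, y)) - ∫ y in Set.Ioi T, Q2 (x₀, y)| < ε / 3 := by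
      rw [abs_sub_lt_iff]
      constructor
      · have := htail_nn x₀; linarith
      · have := htail_nn x; linarith
    calc |((∫ y in Set.Ioc b T, Q2 (x, y)) + ∫ y in Set.Ioi T, Q2 (x, y))
          - ((∫ y in Set.Ioc b T, Q2 (x₀, y)) + ∫ y in Set.Ioi T, Q2 (x₀, y))|
        ≤ |(∫ y in Set.Ioc b T, Q2 (x, y)) - ∫ y in Set.Ioc b T, Q2 (x₀, y)|
          + |(∫ y in Set.Ioi T, Q2 (x, y)) - ∫ y in Set.Ioi T, Q2 (x₀, y)| := by
          have e : ((∫ y in Set.Ioc b T, Q2 (x, y)) + ∫ y in Set.Ioi T, Q2 (x, y))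
              - ((∫ y in Set.Ioc b T, Q2 (x₀, y)) + ∫ y in Set.Ioi T, Q2 (x₀, y))
              = ((∫ y in Set.Ioc b T, Q2 (x, y)) - ∫ y in Set.Ioc b T, Q2 (x₀, y))
              + ((∫ y in Set.Ioi T, Q2 (x, y)) - ∫ y in Set.Ioi T, Q2 (x₀, y)) := by ring
          rw [e]
          exact abs_add_le _ _
      _ < ε / 3 + ε / 3 := add_lt_add h2 habs
      _ ≤ ε := by linarith
  -- integrability of g b
  have hgint : ∀ b : ℝ, Integrable (g b) (volume : Measure ℝ) := by
    intro b
    have h1 : Integrable Q2 (((volume : Measure ℝ).restrict Set.univ).prod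
        ((volume : Measure ℝ).restrict (Set.Ioi b))) := by
      rw [Measure.prod_restrict]
      rw [show ((volume : Measure ℝ).prod (volume : Measure ℝ)) = (volume : Measure (ℝ × ℝ))
        from (Measure.volume_eq_prod ℝ ℝ).symm]
      exact hQ2int.integrableOn
    rw [Measure.restrict_univ] at h1
    have h2 := h1.integral_prod_left
    simp only [hgdef]
    exact h2
  -- Step 3: the second mixed derivative is minus a distribution function
  have step3 : ∀ a b : ℝ, pd2 (pd1 M) a b = -(∫ x in Set.Iio a, g b x) := by
    intro a b
    have h1 : pd2 (pd1 M) a b = ∫ ω, if S₁ ω < a ∧ b < S₂ ω then (-1:ℝ) else 0 := by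
      rw [hpd1]
      exact (step2 a b).deriv
    have hE : MeasurableSet {ω | S₁ ω < a ∧ b < S₂ ω} := by
      have he : {ω | S₁ ω < a ∧ b < S₂ ω}
          = (fun ω => (S₁ ω, S₂ ω)) ⁻¹' (Set.Iio a ×ˢ Set.Ioi b) := rfl
      rw [he]
      exact hm (measurableSet_Iio.prod measurableSet_Ioi)
    have h2 : (∫ ω, if S₁ ω < a ∧ b < S₂ ω then (-1:ℝ) else 0)
        = -((volume {ω | S₁ ω < a ∧ b < S₂ ω}).toReal) := by
      have he : (fun ω => if S₁ ω < a ∧ b < S₂ ω then (-1:ℝ) else 0)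
          = {ω | S₁ ω < a ∧ b < S₂ ω}.indicator (fun _ => (-1:ℝ)) := by
        funext ω
        rw [Set.indicator_apply]
        rfl
      rw [he, integral_indicator_const _ hE]
      simp [measureReal_def]
    have hrect : MeasurableSet (Set.Iio a ×ˢ Set.Ioi b : Set (ℝ × ℝ)) :=
      measurableSet_Iio.prod measurableSet_Ioi
    have h3 : volume {ω | S₁ ω < a ∧ b < S₂ ω}
        = ∫⁻ p in Set.Iio a ×ˢ Set.Ioi b, ENNReal.ofReal (Q2 p) := by
      have he : volume {ω | S₁ ω < a ∧ b < S₂ ω}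
          = Measure.map (fun ω => (S₁ ω, S₂ ω)) volume (Set.Iio a ×ˢ Set.Ioi b) := by
        rw [Measure.map_apply hm hrect]
        rfl
      rw [he, hlaw', withDensity_apply _ hrect]
    have h4 : (∫⁻ p in Set.Iio a ×ˢ Set.Ioi b, ENNReal.ofReal (Q2 p)).toReal
        = ∫ p in Set.Iio a ×ˢ Set.Ioi b, Q2 p := by
      refine (integral_eq_lintegral_of_nonneg_ae
        (Filter.Eventually.of_forall hQ2nn) hQ2meas.aestronglyMeasurable.restrict).symm
    have h6 : IntegrableOn Q2 (Set.Iio a ×ˢ Set.Ioi b) ((volume : Measure ℝ).prod volume) := by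
      rw [show ((volume : Measure ℝ).prod (volume : Measure ℝ)) = (volume : Measure (ℝ × ℝ))
        from (Measure.volume_eq_prod ℝ ℝ).symm]
      exact hQ2int.integrableOn
    have h5 : (∫ p in Set.Iio a ×ˢ Set.Ioi b, Q2 p) = ∫ x in Set.Iio a, g b x := by
      simp only [hgdef]
      calc (∫ p in Set.Iio a ×ˢ Set.Ioi b, Q2 p)
          = ∫ p in Set.Iio a ×ˢ Set.Ioi b, Q2 p ∂((volume : Measure ℝ).prod volume) := by
            rw [show ((volume : Measure ℝ).prod (volume : Measure ℝ)) = (volume : Measure (ℝ × ℝ))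
              from (Measure.volume_eq_prod ℝ ℝ).symm]
        _ = ∫ x in Set.Iio a, ∫ y in Set.Ioi b, Q2 (x, y) := setIntegral_prod _ h6
    rw [h1, h2, h3, h4, h5]
  -- Step 4: third derivative
  have step4 : ∀ b : ℝ, 0 < b → pd1 (pd2 (pd1 M)) k₁ b = -(g b k₁) := by
    intro b hb
    have hD : HasDerivAt (fun t => ∫ x in (0:ℝ)..t, g b x) (g b k₁) k₁ :=
      intervalIntegral.integral_hasDerivAt_right ((hgint b).intervalIntegrable)
        ⟨Set.univ, Filter.univ_mem, (hgint b).aestronglyMeasurable.restrict⟩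
        (hgcont b hb k₁ hk₁)
    have hD2 : HasDerivAt
        (fun t => -((∫ x in Set.Iic (0:ℝ), g b x) + ∫ x in (0:ℝ)..t, g b x))
        (-(g b k₁)) k₁ := (hD.const_add _).neg
    have hev : (fun t => pd2 (pd1 M) t b)
        =ᶠ[nhds k₁] fun t => -((∫ x in Set.Iic (0:ℝ), g b x) + ∫ x in (0:ℝ)..t, g b x) := by
      filter_upwards [eventually_gt_nhds hk₁] with t ht
      rw [step3 t b]
      have hsplit : (∫ x in Set.Iio t, g b x)
          = (∫ x in Set.Iic (0:ℝ), g b x) + ∫ x in (0:ℝ)..t, g b x := by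
        rw [intervalIntegral.integral_of_le ht.le, setIntegral_congr_set Iio_ae_eq_Iic,
          ← Set.Iic_union_Ioc_eq_Iic ht.le]
        exact setIntegral_union (Set.Iic_disjoint_Ioc le_rfl) measurableSet_Ioc
          ((hgint b).integrableOn) ((hgint b).integrableOn)
      rw [hsplit]
    show deriv (fun t => pd2 (pd1 M) t b) k₁ = -(g b k₁)
    exact (hD2.congr_of_eventuallyEq hev).deriv
  -- Step 5: fourth derivative
  set c : ℝ := k₂ / 2 with hcdef
  have hc0 : 0 < c := by rw [hcdef]; positivity
  have hck2 : c < k₂ := by rw [hcdef]; linarith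
  have hint : IntegrableOn (fun y => Q2 (k₁, y)) (Set.Ioi c) volume := hSC k₁ hk₁ c hc0
  have hii : IntervalIntegrable (fun y => Q2 (k₁, y)) volume c k₂ := by
    rw [intervalIntegrable_iff_integrableOn_Ioc_of_le hck2.le]
    exact hint.mono_set Set.Ioc_subset_Ioi_self
  have hcontk₂ : ContinuousAt (fun y => Q2 (k₁, y)) k₂ := by
    have h1 : ContinuousAt (fun y => q k₁ y) k₂ := by
      have hmem : (Set.Ici 0 ×ˢ Set.Ici 0 : Set (ℝ × ℝ)) ∈ nhds (k₁, k₂) := by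
        have h2 : Set.Ioi (0:ℝ) ×ˢ Set.Ioi (0:ℝ) ∈ nhds (k₁, k₂) :=
          (isOpen_Ioi.prod isOpen_Ioi).mem_nhds (Set.mk_mem_prod hk₁ hk₂)
        exact Filter.mem_of_superset h2
          (Set.prod_mono Set.Ioi_subset_Ici_self Set.Ioi_subset_Ici_self)
      have hc2 : ContinuousAt (fun p : ℝ × ℝ => q p.1 p.2) (k₁, k₂) := hqc.continuousAt hmem
      have hg2 : ContinuousAt (fun t : ℝ => ((k₁, t) : ℝ × ℝ)) k₂ :=
        (continuous_const.prodMk continuous_id).continuousAt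
      have h3 := ContinuousAt.comp (g := fun p : ℝ × ℝ => q p.1 p.2)
        (f := fun t : ℝ => ((k₁, t) : ℝ × ℝ)) (x := k₂) hc2 hg2
      exact h3
    refine h1.congr ?_
    filter_upwards [eventually_gt_nhds hk₂] with y hy
    exact (hQ2eq k₁ y hk₁.le hy.le).symm
  have hDD : HasDerivAt (fun s => ∫ y in c..s, Q2 (k₁, y)) (Q2 (k₁, k₂)) k₂ :=
    intervalIntegral.integral_hasDerivAt_right hii
      ⟨Set.univ, Filter.univ_mem,
        ((hslice_meas k₁ hk₁.le).aestronglyMeasurable).restrict⟩ hcontk₂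
  have hD : HasDerivAt
      (fun s => (∫ y in c..s, Q2 (k₁, y)) - ∫ y in Set.Ioi c, Q2 (k₁, y))
      (Q2 (k₁, k₂)) k₂ := hDD.sub_const _
  have hev : (fun s => pd1 (pd2 (pd1 M)) k₁ s)
      =ᶠ[nhds k₂] fun s => (∫ y in c..s, Q2 (k₁, y)) - ∫ y in Set.Ioi c, Q2 (k₁, y) := by
    filter_upwards [eventually_gt_nhds hck2] with s hs
    have hs0 : 0 < s := lt_trans hc0 hs
    rw [step4 s hs0]
    have hsplit : (∫ y in Set.Ioi c, Q2 (k₁, y))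
        = (∫ y in Set.Ioc c s, Q2 (k₁, y)) + ∫ y in Set.Ioi s, Q2 (k₁, y) := by
      rw [← Set.Ioc_union_Ioi_eq_Ioi hs.le]
      exact setIntegral_union (Set.Ioc_disjoint_Ioi le_rfl) measurableSet_Ioi
        (hint.mono_set Set.Ioc_subset_Ioi_self) (hint.mono_set (Set.Ioi_subset_Ioi hs.le))
    simp only [hgdef]
    rw [hsplit, intervalIntegral.integral_of_le hs.le]
    ring
  have hfinal : deriv (fun s => pd1 (pd2 (pd1 M)) k₁ s) k₂ = Q2 (k₁, k₂) :=
    (hD.congr_of_eventuallyEq hev).deriv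
  show deriv (fun s => pd1 (pd2 (pd1 M)) k₁ s) k₂ = q k₁ k₂
  rw [hfinal]
  exact hQ2eq k₁ k₂ hk₁.le hk₂.le
end
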